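/- arXiv:math/0311064 — 14 statements merged into one kernel-verified Lean document; each statement's English description precedes it below -/
import Mathlib

section
/- Let U be an ultrafilter on ℕ and f : ℕ → ℕ. If f(U) = U, then there exists X ∈ U such that f(n) = n for all n ∈ X. -/
/-- A function `f : ℕ → ℕ` is finite-to-one if every fiber is finite. -/
def FinToOne (f : ℕ → ℕ) : Prop := ∀ n : ℕ, (f ⁻¹' {n}).Finite

/-- An ultrafilter `U` on `ℕ` is Hausdorff if whenever two functions push it
forward to the same ultrafilter, they agree on a set in `U`. -/
def IsHausdorffUltra (U : Ultrafilter ℕ) : Prop :=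
  ∀ f g : ℕ → ℕ, Ultrafilter.map f U = Ultrafilter.map g U →
    ∃ X ∈ U, ∀ x ∈ X, f x = g x

/-- An ultrafilter `U` on `ℕ` is weakly Hausdorff if whenever two finite-to-one
functions push it forward to the same ultrafilter, they agree on a set in `U`. -/
def IsWeaklyHausdorffUltra (U : Ultrafilter ℕ) : Prop :=
  ∀ f g : ℕ → ℕ, FinToOne f → FinToOne g →
    Ultrafilter.map f U = Ultrafilter.map g U →
    ∃ X ∈ U, ∀ x ∈ X, f x = g x

/-!
Katětov's argument. The graph joining `x` to `f x` has, on every finite vertex set, a vertex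
with at most two neighbours there (each vertex has out-degree at most one, so some vertex has
in-degree at most one); hence it is 3-colourable, first on finite sets and then, by compactness,
on the whole vertex set. Some colour class `A` lies in `U`, and so does `f⁻¹(A)` because
`f(U) = U`. On `A ∩ f⁻¹(A)` the points `x` and `f x` have the same colour, so they are not
adjacent, that is, `f x = x`.
-/

open Finset

namespace SimpleGraph

variable {V : Type*}

theorem exists_coloring_finset_of_degenerate [DecidableEq V] (G : SimpleGraph V)
    [DecidableRel G.Adj] {k : ℕ}
    (hG : ∀ s : Finset V, s.Nonempty → ∃ v ∈ s, #{w ∈ s | G.Adj v w} ≤ k) (s : Finset V) :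
    ∃ c : V → Fin (k + 1), ∀ x ∈ s, ∀ y ∈ s, G.Adj x y → c x ≠ c y := by
  induction s using Finset.strongInduction with
  | H s ih =>
  rcases s.eq_empty_or_nonempty with rfl | hs
  · exact ⟨fun _ => 0, by simp⟩
  obtain ⟨v, hv, hdeg⟩ := hG s hs
  obtain ⟨c, hc⟩ := ih (s.erase v) (erase_ssubset hv)
  obtain ⟨a, -, ha⟩ : ∃ a ∈ (univ : Finset (Fin (k + 1))), a ∉ image c {w ∈ s | G.Adj v w} :=
    exists_mem_notMem_of_card_lt_card <| by
      simpa using (card_image_le.trans hdeg).trans_lt k.lt_succ_self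
  have hfree : ∀ y ∈ s, G.Adj v y → Function.update c v a y ≠ a := fun y hy hvy => by
    rw [Function.update_of_ne hvy.ne.symm]
    exact fun hya => ha (hya ▸ mem_image_of_mem c (mem_filter.2 ⟨hy, hvy⟩))
  refine ⟨Function.update c v a, fun x hx y hy hxy => ?_⟩
  by_cases hxv : x = v
  · subst hxv
    simpa using (hfree y hy hxy).symm
  by_cases hyv : y = v
  · subst hyv
    simpa using hfree x hx hxy.symm
  rw [Function.update_of_ne hxv, Function.update_of_ne hyv]
  exact hc x (mem_erase.2 ⟨hxv, hx⟩) y (mem_erase.2 ⟨hyv, hy⟩) hxy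

theorem colorable_of_degenerate (G : SimpleGraph V) [DecidableRel G.Adj] {k : ℕ}
    (hG : ∀ s : Finset V, s.Nonempty → ∃ v ∈ s, #{w ∈ s | G.Adj v w} ≤ k) :
    G.Colorable (k + 1) := by
  classical
  refine nonempty_hom_of_forall_finite_subgraph_hom fun G' hfin => Classical.choice ?_
  obtain ⟨c, hc⟩ := G.exists_coloring_finset_of_degenerate hG hfin.toFinset
  exact ⟨fun x => c x, fun {x y} hxy => hc x (by simp) y (by simp) (G'.adj_sub hxy)⟩

theorem fromRel_apply_eq_degenerate [DecidableEq V] (f : V → V) (s : Finset V)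
    (hs : s.Nonempty) : ∃ v ∈ s, #{w ∈ s | (fromRel fun x y => f x = y).Adj v w} ≤ 2 := by
  obtain ⟨v, hv, hfiber⟩ :=
    exists_card_fiber_le_of_card_le_mul (s := s) (f := f) (n := 1) hs (by simp)
  refine ⟨v, hv, ?_⟩
  calc #{w ∈ s | (fromRel fun x y => f x = y).Adj v w}
      ≤ #(insert (f v) {x ∈ s | f x = v}) := card_le_card fun w => by
        simp only [mem_filter, mem_insert, fromRel_adj]
        tauto
    _ ≤ 2 := (card_insert_le _ _).trans (by omega)

theorem colorable_fromRel_apply_eq (f : V → V) : (fromRel fun x y => f x = y).Colorable 3 := by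
  classical
  exact colorable_of_degenerate _ (fromRel_apply_eq_degenerate f)

end SimpleGraph

namespace Ultrafilter

variable {α : Type*}

theorem exists_preimage_singleton_mem {ι : Type*} [Finite ι] (U : Ultrafilter α) (c : α → ι) :
    ∃ i, c ⁻¹' {i} ∈ U := by
  obtain ⟨i, hi⟩ := (U.map c).eq_pure_of_finite
  exact ⟨i, mem_map.1 (hi ▸ mem_pure.2 rfl)⟩

theorem eventually_apply_eq_self_of_map_eq_self {U : Ultrafilter α} {f : α → α}
    (h : U.map f = U) : ∀ᶠ x in U, f x = x := by
  obtain ⟨c⟩ := SimpleGraph.colorable_fromRel_apply_eq f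
  obtain ⟨i, hi⟩ := U.exists_preimage_singleton_mem c
  have hfi : f ⁻¹' (c ⁻¹' {i}) ∈ U := mem_map.1 (h.symm ▸ hi)
  filter_upwards [hi, hfi] with x hx hfx
  by_contra hne
  exact c.valid ((SimpleGraph.fromRel_adj _ _ _).2 ⟨Ne.symm hne, Or.inl rfl⟩) (hx.trans hfx.symm)

end Ultrafilter

/-- If `f(U) = U` then `f` is the identity on a set in `U`. -/
theorem pushforward_eq_self_implies_id_on_set (U : Ultrafilter ℕ) (f : ℕ → ℕ)
    (h : Ultrafilter.map f U = U) :
    ∃ X ∈ U, ∀ n ∈ X, f n = n :=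
  ⟨{n | f n = n}, Ultrafilter.eventually_apply_eq_self_of_map_eq_self h, fun _ hn => hn⟩
end

section
/- Let U be an ultrafilter on ℕ and f, g : ℕ → ℕ. If f(U) = g(U) and f is injective on some set belonging to U, then there exists Y ∈ U such that f(y) = g(y) for all y ∈ Y. -/
/-- Helper: any ultrafilter contains a set on which a given `ℕ`-valued function
has constant parity. -/
lemma parity_class_aux (U : Ultrafilter ℕ) (p : ℕ → ℕ) :
    ∃ C ∈ U, ∀ a ∈ C, ∀ b ∈ C, p a % 2 = p b % 2 := by
  rcases U.mem_or_compl_mem {x | p x % 2 = 0} with hm | hm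
  · exact ⟨_, hm, fun a ha b hb => by
      simp only [Set.mem_setOf_eq] at ha hb; omega⟩
  · refine ⟨_, hm, fun a ha b hb => ?_⟩
    simp only [Set.mem_compl_iff, Set.mem_setOf_eq] at ha hb
    omega

/-- Interval endpoints adapted to a function `h'`. -/
def intervalSeq (h' : ℕ → ℕ) : ℕ → ℕ
  | 0 => 0
  | k+1 => max (intervalSeq h' k) ((Finset.range (intervalSeq h' k)).sup h') + 1

lemma no_dec (U : Ultrafilter ℕ) (h : ℕ → ℕ) (hU : Ultrafilter.map h U = U)
    (hB : {x | h x < x} ∈ U) : False := by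
  set h' : ℕ → ℕ := fun x => if h x < x then h x else x with hh'
  have hle : ∀ x, h' x ≤ x := by intro x; simp only [hh']; split <;> omega
  have hex : ∀ x, ∃ n, h'^[n+1] x = h'^[n] x := by
    intro x
    by_contra hcon
    push_neg at hcon
    have hdec : ∀ n, h'^[n+1] x < h'^[n] x := by
      intro n
      have h1 := hcon n
      have h2 := hle (h'^[n] x)
      rw [Function.iterate_succ_apply'] at h1 ⊢
      omega
    have hbound : ∀ n, h'^[n] x + n ≤ x := by
      intro n; induction n with
      | zero => simp
      | succ k ih => have := hdec k; omega
    have := hbound (x+1); omega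
  have hstep : ∀ x, h' x ≠ x → Nat.find (hex x) = Nat.find (hex (h' x)) + 1 := by
    intro x hne
    have hspec := Nat.find_spec (hex (h' x))
    rw [Nat.find_eq_iff]
    constructor
    · rw [Function.iterate_succ_apply, Function.iterate_succ_apply]
      exact hspec
    · intro n hn
      match n with
      | 0 => simpa using hne
      | (m+1) =>
        rw [Function.iterate_succ_apply, Function.iterate_succ_apply]
        exact Nat.find_min (hex (h' x)) (by omega)
  obtain ⟨C, hC, hCp⟩ := parity_class_aux U (fun x => Nat.find (hex x))
  have hC' : h ⁻¹' C ∈ U := by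
    have h1 : C ∈ Ultrafilter.map h U := by rw [hU]; exact hC
    exact Ultrafilter.mem_map.mp h1
  obtain ⟨x, hx⟩ :=
    Filter.nonempty_of_mem (Filter.inter_mem (Filter.inter_mem hB hC) hC' :
      {x | h x < x} ∩ C ∩ h ⁻¹' C ∈ U)
  simp only [Set.mem_inter_iff, Set.mem_preimage, Set.mem_setOf_eq] at hx
  obtain ⟨⟨hxlt, hxC⟩, hxC'⟩ := hx
  have hh'x : h' x = h x := by simp only [hh', if_pos hxlt]
  have hne : h' x ≠ x := by omega
  have hst := hstep x hne
  rw [hh'x] at hst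
  have hp := hCp x hxC (h x) hxC'
  omega

lemma no_inc (U : Ultrafilter ℕ) (h : ℕ → ℕ) (hU : Ultrafilter.map h U = U)
    (hB : {x | x < h x} ∈ U) : False := by
  set h' : ℕ → ℕ := fun x => if x < h x then h x else x with hh'
  have hge : ∀ x, x ≤ h' x := by intro x; simp only [hh']; split <;> omega
  set N : ℕ → ℕ := intervalSeq h' with hN
  have hNsucc : ∀ k, N (k+1) = max (N k) ((Finset.range (N k)).sup h') + 1 :=
    fun k => rfl
  have hNlt : ∀ k, N k < N (k+1) := by
    intro k
    have := le_max_left (N k) ((Finset.range (N k)).sup h')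
    rw [hNsucc]; omega
  have hNmono : StrictMono N := strictMono_nat_of_lt_succ hNlt
  have hNk : ∀ k, k ≤ N k := fun k => hNmono.le_apply
  have hNh : ∀ k y, y < N k → h' y < N (k+1) := by
    intro k y hy
    have h1 : h' y ≤ (Finset.range (N k)).sup h' :=
      Finset.le_sup (Finset.mem_range.mpr hy)
    have h2 := le_max_right (N k) ((Finset.range (N k)).sup h')
    rw [hNsucc]; omega
  set idx : ℕ → ℕ := fun x => Nat.findGreatest (fun k => N k ≤ x) x with hidx
  have hidx1 : ∀ x, N (idx x) ≤ x := by
    intro x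
    exact Nat.findGreatest_spec (P := fun k => N k ≤ x) (Nat.zero_le x)
      (by show N 0 ≤ x; simp [hN, intervalSeq])
  have hidx2 : ∀ x, x < N (idx x + 1) := by
    intro x
    by_contra hcon
    push_neg at hcon
    have h1 : idx x + 1 ≤ x := le_trans (hNk _) hcon
    exact Nat.findGreatest_is_greatest (P := fun k => N k ≤ x) (Nat.lt_succ_self _) h1 hcon
  have hidxmono : ∀ x y, x ≤ y → idx x ≤ idx y := by
    intro x y hxy
    exact Nat.le_findGreatest (P := fun k => N k ≤ y) (le_trans (le_trans (hNk _) (hidx1 x)) hxy)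
      (le_trans (hidx1 x) hxy)
  have hidxh : ∀ x, x < h' x → idx (h' x) = idx x ∨ idx (h' x) = idx x + 1 := by
    intro x hx
    have hlo : idx x ≤ idx (h' x) := hidxmono _ _ (le_of_lt hx)
    have hhi : idx (h' x) < idx x + 2 := by
      by_contra hcon
      push_neg at hcon
      have h1 : h' x < N (idx x + 2) := hNh _ _ (hidx2 x)
      have h2 : N (idx x + 2) ≤ N (idx (h' x)) := hNmono.le_iff_le.mpr hcon
      have h3 := hidx1 (h' x)
      omega
    omega
  have hex : ∀ x, ∃ n, h'^[n+1] x = h'^[n] x ∨ idx (h'^[n+1] x) ≠ idx (h'^[n] x) := by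
    intro x
    by_contra hcon
    push_neg at hcon
    have hinc : ∀ n, h'^[n] x < h'^[n+1] x := by
      intro n
      have h1 := (hcon n).1
      have h2 := hge (h'^[n] x)
      rw [Function.iterate_succ_apply'] at h1 ⊢
      omega
    have hidxc : ∀ n, idx (h'^[n] x) = idx x := by
      intro n
      induction n with
      | zero => rfl
      | succ k ih => have := (hcon k).2; omega
    have hgrow : ∀ n, x + n ≤ h'^[n] x := by
      intro n; induction n with
      | zero => simp
      | succ k ih => have := hinc k; omega
    have h1 := hgrow (N (idx x + 1))
    have h2 := hidx2 (h'^[N (idx x + 1)] x)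
    rw [hidxc] at h2
    omega
  have hstep : ∀ x, h' x ≠ x → idx (h' x) = idx x →
      Nat.find (hex x) = Nat.find (hex (h' x)) + 1 := by
    intro x hne hidxeq
    have hspec := Nat.find_spec (hex (h' x))
    rw [Nat.find_eq_iff]
    constructor
    · rw [Function.iterate_succ_apply, Function.iterate_succ_apply]
      exact hspec
    · intro n hn
      match n with
      | 0 =>
        simp only [Function.iterate_one, Function.iterate_zero, id_eq]
        push_neg
        exact ⟨hne, hidxeq⟩
      | (m+1) =>
        rw [Function.iterate_succ_apply, Function.iterate_succ_apply]
        exact Nat.find_min (hex (h' x)) (by omega)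
  obtain ⟨C1, hC1, hC1p⟩ := parity_class_aux U idx
  obtain ⟨C2, hC2, hC2p⟩ := parity_class_aux U (fun x => Nat.find (hex x))
  have hC1' : h ⁻¹' C1 ∈ U := by
    have h1 : C1 ∈ Ultrafilter.map h U := by rw [hU]; exact hC1
    exact Ultrafilter.mem_map.mp h1
  have hC2' : h ⁻¹' C2 ∈ U := by
    have h1 : C2 ∈ Ultrafilter.map h U := by rw [hU]; exact hC2
    exact Ultrafilter.mem_map.mp h1
  obtain ⟨x, hx⟩ :=
    Filter.nonempty_of_mem (Filter.inter_mem (Filter.inter_mem (Filter.inter_mem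
      (Filter.inter_mem hB hC1) hC1') hC2) hC2' :
      {x | x < h x} ∩ C1 ∩ h ⁻¹' C1 ∩ C2 ∩ h ⁻¹' C2 ∈ U)
  simp only [Set.mem_inter_iff, Set.mem_preimage, Set.mem_setOf_eq] at hx
  obtain ⟨⟨⟨⟨hxlt, hx1⟩, hx1'⟩, hx2⟩, hx2'⟩ := hx
  have hh'x : h' x = h x := by simp only [hh', if_pos hxlt]
  rcases hidxh x (by omega) with heq | hsucc
  · have hne : h' x ≠ x := by omega
    have hst := hstep x hne heq
    rw [hh'x] at hst
    have hp := hC2p x hx2 (h x) hx2'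
    omega
  · rw [hh'x] at hsucc
    have hp := hC1p x hx1 (h x) hx1'
    omega

/-- Katětov-style fixed point lemma: if `h` pushes `U` to itself, then `h` is
the identity on a set in `U`. -/
lemma fixed_mem_of_map_eq_self (U : Ultrafilter ℕ) (h : ℕ → ℕ)
    (hU : Ultrafilter.map h U = U) : {x | h x = x} ∈ U := by
  by_contra hc
  have h1 : {x | h x = x}ᶜ ∈ U := Ultrafilter.compl_mem_iff_notMem.mpr hc
  have h2 : {x | h x < x} ∪ {x | x < h x} ∈ U := by
    refine Filter.mem_of_superset h1 ?_
    intro x hx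
    simp only [Set.mem_compl_iff, Set.mem_setOf_eq, Set.mem_union] at hx ⊢
    omega
  rcases Ultrafilter.union_mem_iff.mp h2 with hm | hm
  · exact no_dec U h hU hm
  · exact no_inc U h hU hm

/-- If `f(U) = g(U)` and `f` is injective on a set in `U`, then `f` and `g`
agree on a set in `U`. -/
theorem eq_pushforward_of_injOn_implies_agree (U : Ultrafilter ℕ) (f g : ℕ → ℕ)
    (h : Ultrafilter.map f U = Ultrafilter.map g U)
    (hinj : ∃ A ∈ U, Set.InjOn f A) :
    ∃ Y ∈ U, ∀ y ∈ Y, f y = g y := by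
  classical
  obtain ⟨A, hA, hinjA⟩ := hinj
  set k : ℕ → ℕ := fun x => Function.invFunOn f A (g x) with hk
  have hfA : f '' A ∈ Ultrafilter.map f U :=
    Ultrafilter.mem_map.mpr (Filter.mem_of_superset hA (Set.subset_preimage_image f A))
  have hgA : g ⁻¹' (f '' A) ∈ U := Ultrafilter.mem_map.mp (h ▸ hfA)
  set C : Set ℕ := A ∩ g ⁻¹' (f '' A) with hC
  have hCU : C ∈ U := Filter.inter_mem hA hgA
  have hfk : ∀ x ∈ C, f (k x) = g x ∧ k x ∈ A := by
    intro x hx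
    obtain ⟨hxA, hxg⟩ := hx
    obtain ⟨a, haA, hag⟩ := hxg
    exact ⟨Function.invFunOn_eq ⟨a, haA, hag⟩, Function.invFunOn_mem ⟨a, haA, hag⟩⟩
  have hcongr : Ultrafilter.map (f ∘ k) U = Ultrafilter.map g U := by
    apply Ultrafilter.coe_injective
    rw [Ultrafilter.coe_map, Ultrafilter.coe_map]
    exact Filter.map_congr (Filter.eventuallyEq_of_mem hCU (fun x hx => (hfk x hx).1))
  have hfmk : Ultrafilter.map f (Ultrafilter.map k U) = Ultrafilter.map f U := by
    rw [Ultrafilter.map_map, hcongr, h]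
  have hAk : A ∈ Ultrafilter.map k U :=
    Ultrafilter.mem_map.mpr (Filter.mem_of_superset hCU (fun x hx => (hfk x hx).2))
  have hle : (Ultrafilter.map k U : Filter ℕ) ≤ (U : Filter ℕ) := by
    intro S hS
    have hS' : S ∩ A ∈ U := Filter.inter_mem hS hA
    have h1 : f '' (S ∩ A) ∈ Ultrafilter.map f U :=
      Ultrafilter.mem_map.mpr
        (Filter.mem_of_superset hS' (Set.subset_preimage_image f _))
    have h3 : f ⁻¹' (f '' (S ∩ A)) ∈ Ultrafilter.map k U :=
      Ultrafilter.mem_map.mp (hfmk ▸ h1)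
    refine Filter.mem_of_superset (Filter.inter_mem h3 hAk) ?_
    rintro y ⟨hy1, hy2⟩
    obtain ⟨s, ⟨hsS, hsA⟩, hfs⟩ := hy1
    exact (hinjA hsA hy2 hfs) ▸ hsS
  have hmapk : Ultrafilter.map k U = U :=
    Ultrafilter.coe_injective (U.unique hle)
  have hfix : {x | k x = x} ∈ U := fixed_mem_of_map_eq_self U k hmapk
  refine ⟨{x | k x = x} ∩ C, Filter.inter_mem hfix hCU, ?_⟩
  rintro y ⟨hy1, hy2⟩
  have h1 := (hfk y hy2).1
  have h2 : k y = y := hy1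
  rw [h2] at h1
  exact h1
end

section
/- Every Ramsey (selective) ultrafilter on ℕ is Hausdorff. -/
/-- A nonprincipal ultrafilter `U` on `ℕ` is Ramsey (selective) if for every
partition of `ℕ` into sets not in `U` there is a set in `U` meeting each piece
in at most one point. -/
def IsRamseyUltra (U : Ultrafilter ℕ) : Prop :=
  (∀ n : ℕ, U ≠ pure n) ∧
  ∀ A : ℕ → Set ℕ, Pairwise (Function.onFun Disjoint A) → (⋃ n, A n) = Set.univ →
    (∀ n, A n ∉ U) → ∃ X ∈ U, ∀ n, (X ∩ A n).Subsingleton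


noncomputable def histFun (adj : ℕ → ℕ → Prop) : ℕ → ℕ → ℕ
  | 0 => fun _ => 0
  | n+1 => fun m =>
      if m = n then sInf {k | ∀ m' < n, adj m' n → histFun adj n m' ≠ k}
      else histFun adj n m

noncomputable def col (adj : ℕ → ℕ → Prop) (n : ℕ) : ℕ := histFun adj (n+1) n

lemma hist_eq_col (adj : ℕ → ℕ → Prop) : ∀ {N m : ℕ}, m < N → histFun adj N m = col adj m := by
  intro N
  induction N with
  | zero => intro m hm; omega
  | succ N ih =>
    intro m hm
    rcases Nat.lt_succ_iff_lt_or_eq.1 hm with h | h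
    · have : histFun adj (N+1) m = histFun adj N m := by
        simp [histFun, Nat.ne_of_lt h]
      rw [this, ih h]
    · subst h; rfl

lemma col_eq (adj : ℕ → ℕ → Prop) (n : ℕ) :
    col adj n = sInf {k | ∀ m' < n, adj m' n → col adj m' ≠ k} := by
  have : col adj n = sInf {k | ∀ m' < n, adj m' n → histFun adj n m' ≠ k} := by
    simp [col, histFun]
  rw [this]
  congr 1
  ext k
  constructor
  · intro h m' hm' ha; rw [← hist_eq_col adj hm']; exact h m' hm' ha
  · intro h m' hm' ha; rw [hist_eq_col adj hm']; exact h m' hm' ha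

lemma exists_le_two_ne (x y : ℕ) : ∃ k ≤ 2, k ≠ x ∧ k ≠ y := by
  by_cases hx : x = 0
  · by_cases hy : y = 1
    · exact ⟨2, by omega, by omega, by omega⟩
    · exact ⟨1, by omega, by omega, by omega⟩
  · by_cases hy : y = 0
    · by_cases hx1 : x = 1
      · exact ⟨2, by omega, by omega, by omega⟩
      · exact ⟨1, by omega, by omega, by omega⟩
    · exact ⟨0, by omega, by omega, by omega⟩

lemma col_mem_and_le (adj : ℕ → ℕ → Prop)
    (hdeg : ∀ n, ∃ a b, ∀ m, adj m n → m = a ∨ m = b) (n : ℕ) :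
    (∀ m' < n, adj m' n → col adj m' ≠ col adj n) ∧ col adj n ≤ 2 := by
  obtain ⟨a, b, hab⟩ := hdeg n
  obtain ⟨k, hk2, hka, hkb⟩ := exists_le_two_ne (col adj a) (col adj b)
  have hkmem : k ∈ {k | ∀ m' < n, adj m' n → col adj m' ≠ k} := by
    intro m' _ ha
    rcases hab m' ha with h | h <;> subst h
    · exact fun h => hka h.symm
    · exact fun h => hkb h.symm
  constructor
  · have := Nat.sInf_mem ⟨k, hkmem⟩
    rw [← col_eq] at this
    exact this
  · rw [col_eq]; exact le_trans (Nat.sInf_le hkmem) hk2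

lemma col_ne (adj : ℕ → ℕ → Prop)
    (hdeg : ∀ n, ∃ a b, ∀ m, adj m n → m = a ∨ m = b)
    (hsymm : ∀ m n, adj m n → adj n m)
    {m n : ℕ} (hmn : m ≠ n) (ha : adj m n) : col adj m ≠ col adj n := by
  rcases Nat.lt_or_ge m n with h | h
  · exact (col_mem_and_le adj hdeg n).1 m h ha
  · have h' : n < m := by omega
    exact fun he => (col_mem_and_le adj hdeg m).1 n h' (hsymm m n ha) he.symm

lemma inj_or_const (U : Ultrafilter ℕ)
    (hU : ∀ A : ℕ → Set ℕ, Pairwise (Function.onFun Disjoint A) → (⋃ n, A n) = Set.univ →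
      (∀ n, A n ∉ U) → ∃ X ∈ U, ∀ n, (X ∩ A n).Subsingleton) (f : ℕ → ℕ) :
    (∃ n, f ⁻¹' {n} ∈ U) ∨ ∃ X ∈ U, Set.InjOn f X := by
  by_cases h : ∃ n, f ⁻¹' {n} ∈ U
  · exact Or.inl h
  · push_neg at h
    have hpd : Pairwise (Function.onFun Disjoint (fun n => f ⁻¹' {n})) := by
      intro a b hab
      exact Set.disjoint_left.2 fun x hxa hxb => hab ((Set.mem_preimage.1 hxa).symm.trans hxb)
    have hun : (⋃ n, f ⁻¹' {n}) = Set.univ :=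
      Set.eq_univ_of_forall fun x => Set.mem_iUnion.2 ⟨f x, rfl⟩
    obtain ⟨X, hX, hX2⟩ := hU (fun n => f ⁻¹' {n}) hpd hun h
    refine Or.inr ⟨X, hX, fun x hx y hy hxy => ?_⟩
    exact hX2 (f x) ⟨hx, rfl⟩ ⟨hy, hxy.symm⟩


theorem aux_main (U : Ultrafilter ℕ) (hU : IsRamseyUltra U)
    (f g : ℕ → ℕ) (hfg : Ultrafilter.map f U = Ultrafilter.map g U) :
    ∃ X ∈ U, ∀ x ∈ X, f x = g x := by
  have key : ∀ n : ℕ, f ⁻¹' {n} ∈ U → g ⁻¹' {n} ∈ U := by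
    intro n hn
    have h1 : ({n} : Set ℕ) ∈ Ultrafilter.map f U := Ultrafilter.mem_map.2 hn
    rw [hfg] at h1
    exact Ultrafilter.mem_map.1 h1
  rcases inj_or_const U hU.2 f with ⟨n, hn⟩ | ⟨Xf, hXf, hfI⟩
  · refine ⟨f ⁻¹' {n} ∩ g ⁻¹' {n}, U.toFilter.inter_mem hn (key n hn), fun x hx => ?_⟩
    have h1 : f x = n := hx.1
    have h2 : g x = n := hx.2
    rw [h1, h2]
  rcases inj_or_const U hU.2 g with ⟨n, hn⟩ | ⟨Xg, hXg, hgI⟩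
  · have hfn : f ⁻¹' {n} ∈ U := by
      have h1 : ({n} : Set ℕ) ∈ Ultrafilter.map g U := Ultrafilter.mem_map.2 hn
      rw [← hfg] at h1
      exact Ultrafilter.mem_map.1 h1
    refine ⟨f ⁻¹' {n} ∩ g ⁻¹' {n}, U.toFilter.inter_mem hfn hn, fun x hx => ?_⟩
    have h1 : f x = n := hx.1
    have h2 : g x = n := hx.2
    rw [h1, h2]
  by_cases hA : {x | f x ≠ g x} ∈ U
  · exfalso
    set X : Set ℕ := Xf ∩ Xg ∩ {x | f x ≠ g x} with hXdef
    have hXU : X ∈ U := U.toFilter.inter_mem (U.toFilter.inter_mem hXf hXg) hA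
    have hfIX : Set.InjOn f X := hfI.mono (fun x hx => hx.1.1)
    have hgIX : Set.InjOn g X := hgI.mono (fun x hx => hx.1.2)
    have hne : ∀ x ∈ X, f x ≠ g x := fun x hx => hx.2
    set adj : ℕ → ℕ → Prop :=
      fun x y => x ∈ X ∧ y ∈ X ∧ x ≠ y ∧ (f x = g y ∨ g x = f y) with hadj
    have hsymm : ∀ m n, adj m n → adj n m := by
      rintro m n ⟨h1, h2, h3, h4 | h4⟩
      · exact ⟨h2, h1, h3.symm, Or.inr h4.symm⟩
      · exact ⟨h2, h1, h3.symm, Or.inl h4.symm⟩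
    have hdeg : ∀ n, ∃ a b, ∀ m, adj m n → m = a ∨ m = b := by
      intro n
      by_cases hn : n ∈ X
      · classical
        set a : ℕ := if h : ∃ m, m ∈ X ∧ f m = g n then h.choose else 0 with ha
        set b : ℕ := if h : ∃ m, m ∈ X ∧ g m = f n then h.choose else 0 with hb
        refine ⟨a, b, ?_⟩
        rintro m ⟨hmX, _, _, hc | hc⟩
        · left
          have hex : ∃ m, m ∈ X ∧ f m = g n := ⟨m, hmX, hc⟩
          rw [ha, dif_pos hex]
          exact hfIX hmX hex.choose_spec.1 (hc.trans hex.choose_spec.2.symm)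
        · right
          have hex : ∃ m, m ∈ X ∧ g m = f n := ⟨m, hmX, hc⟩
          rw [hb, dif_pos hex]
          exact hgIX hmX hex.choose_spec.1 (hc.trans hex.choose_spec.2.symm)
      · exact ⟨0, 0, fun m hm => absurd hm.2.1 hn⟩
    -- one color class is in U
    have hcover : ∀ n, col adj n = 0 ∨ col adj n = 1 ∨ col adj n = 2 := by
      intro n
      have := (col_mem_and_le adj hdeg n).2
      omega
    have hone : {n | col adj n = 0} ∈ U ∨ {n | col adj n = 1} ∈ U ∨ {n | col adj n = 2} ∈ U := by
      by_contra hc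
      push_neg at hc
      obtain ⟨h0, h1, h2⟩ := hc
      have m0 : {n | col adj n = 0}ᶜ ∈ U := Ultrafilter.compl_mem_iff_notMem.2 h0
      have m1 : {n | col adj n = 1}ᶜ ∈ U := Ultrafilter.compl_mem_iff_notMem.2 h1
      have m2 : {n | col adj n = 2}ᶜ ∈ U := Ultrafilter.compl_mem_iff_notMem.2 h2
      obtain ⟨n, hn⟩ :=
        Ultrafilter.nonempty_of_mem (U.toFilter.inter_mem (U.toFilter.inter_mem m0 m1) m2)
      simp only [Set.mem_inter_iff, Set.mem_compl_iff, Set.mem_setOf_eq] at hn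
      rcases hcover n with h | h | h <;> tauto
    obtain ⟨k, hk⟩ : ∃ k, {n | col adj n = k} ∈ U := by
      rcases hone with h | h | h
      exacts [⟨0, h⟩, ⟨1, h⟩, ⟨2, h⟩]
    set Y : Set ℕ := X ∩ {n | col adj n = k} with hYdef
    have hYU : Y ∈ U := U.toFilter.inter_mem hXU hk
    have hdisj : ∀ x ∈ Y, ∀ y ∈ Y, f x ≠ g y := by
      intro x hx y hy hc
      by_cases hxy : x = y
      · subst hxy; exact hne x hx.1 hc
      · have : adj x y := ⟨hx.1, hy.1, hxy, Or.inl hc⟩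
        exact col_ne adj hdeg hsymm hxy this (hx.2.trans hy.2.symm)
    have himg : f '' Y ∈ Ultrafilter.map f U :=
      Ultrafilter.mem_map.2 (Filter.mem_of_superset hYU (Set.subset_preimage_image f Y))
    rw [hfg] at himg
    have hg : g ⁻¹' (f '' Y) ∈ U := Ultrafilter.mem_map.1 himg
    obtain ⟨y, hy1, hy2⟩ := Ultrafilter.nonempty_of_mem (U.toFilter.inter_mem hYU hg)
    obtain ⟨x, hxY, hxy⟩ := hy2
    exact hdisj x hxY y hy1 hxy
  · refine ⟨{x | f x = g x}, ?_, fun x hx => hx⟩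
    have := (Ultrafilter.compl_mem_iff_notMem (s := {x | f x ≠ g x}) (f := U)).2 hA
    convert this using 1
    ext x
    simp

/-- Every Ramsey (selective) ultrafilter on `ℕ` is Hausdorff. -/
theorem isHausdorff_of_ramsey (U : Ultrafilter ℕ) (hU : IsRamseyUltra U) :
    IsHausdorffUltra U := by
  intro f g hfg
  exact aux_main U hU f g hfg
end

section
/- Every q-point ultrafilter on ℕ is weakly Hausdorff. -/
/-- A nonprincipal ultrafilter `U` on `ℕ` is a q-point if for every partition
of `ℕ` into finite sets there is a set in `U` meeting each piece
in at most one point. -/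
def IsQPoint (U : Ultrafilter ℕ) : Prop :=
  (∀ n : ℕ, U ≠ pure n) ∧
  ∀ A : ℕ → Set ℕ, Pairwise (Function.onFun Disjoint A) → (⋃ n, A n) = Set.univ →
    (∀ n, (A n).Finite) → ∃ X ∈ U, ∀ n, (X ∩ A n).Subsingleton

lemma fin3_avoid (x y : Fin 3) : ∃ z : Fin 3, z ≠ x ∧ z ≠ y := by revert x y; decide

lemma exists_coloring (adj : ℕ → ℕ → Prop)
    (hsymm : ∀ m n, adj m n → adj n m)
    (hirr : ∀ n, ¬ adj n n)
    (hdeg : ∀ n, ∃ a b, ∀ m, adj n m → m = a ∨ m = b) :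
    ∃ c : ℕ → Fin 3, ∀ m n, adj m n → c m ≠ c n := by
  classical
  have hfree : ∀ (n : ℕ) (prev : ℕ → Fin 3),
      ∃ i : Fin 3, ∀ m, adj n m → prev m ≠ i := by
    intro n prev
    obtain ⟨a, b, hab⟩ := hdeg n
    obtain ⟨z, hz1, hz2⟩ := fin3_avoid (prev a) (prev b)
    refine ⟨z, fun m hm => ?_⟩
    rcases hab m hm with rfl | rfl
    · exact hz1.symm
    · exact hz2.symm
  let seq : ℕ → ℕ → Fin 3 := fun n =>
    Nat.rec (fun _ => 0) (fun k prev => Function.update prev k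
      (Classical.choose (hfree k prev))) n
  have hseq_succ : ∀ k, seq (k+1) = Function.update (seq k) k
      (Classical.choose (hfree k (seq k))) := fun k => rfl
  have hstab : ∀ k n, k < n → seq n k = seq (k+1) k := by
    intro k n hkn
    induction n with
    | zero => omega
    | succ n ih =>
      rcases Nat.lt_succ_iff_lt_or_eq.mp hkn with h | h
      · rw [hseq_succ, Function.update_of_ne (by omega : k ≠ n), ih h]
      · subst h; rfl
  set c : ℕ → Fin 3 := fun k => seq (k+1) k with hc
  have key : ∀ m n, m < n → adj n m → c m ≠ c n := by
    intro m n hmn hadj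
    have hcn : c n = Classical.choose (hfree n (seq n)) := by
      show seq (n+1) n = _
      rw [hseq_succ, Function.update_self]
    have hspec := Classical.choose_spec (hfree n (seq n)) m hadj
    have hm : seq n m = c m := hstab m n hmn
    rw [hcn, ← hm]
    exact hspec
  refine ⟨c, fun m n hadj => ?_⟩
  rcases lt_trichotomy m n with h | h | h
  · exact key m n h (hsymm m n hadj)
  · exact absurd (h ▸ hadj) (hirr n)
  · exact (key n m h hadj).symm

/-- Every q-point ultrafilter on `ℕ` is weakly Hausdorff. -/
theorem isWeaklyHausdorff_of_qPoint (U : Ultrafilter ℕ) (hU : IsQPoint U) :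
    IsWeaklyHausdorffUltra U := by
  classical
  intro f g hf hg hmap
  have key : ∀ h : ℕ → ℕ, FinToOne h →
      ∃ X ∈ U, ∀ x ∈ X, ∀ y ∈ X, h x = h y → x = y := by
    intro h hh
    have hpair : Pairwise (Function.onFun Disjoint (fun n => h ⁻¹' {n})) := by
      intro m n hmn
      rw [Function.onFun, Set.disjoint_left]
      intro x hxm hxn
      exact hmn ((Set.mem_singleton_iff.mp hxm).symm.trans (Set.mem_singleton_iff.mp hxn))
    have huni : (⋃ n, (fun n => h ⁻¹' {n}) n) = Set.univ := by
      ext x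
      simp only [Set.mem_iUnion, Set.mem_preimage, Set.mem_singleton_iff, Set.mem_univ, iff_true]
      exact ⟨h x, rfl⟩
    obtain ⟨X, hXU, hX⟩ := hU.2 (fun n => h ⁻¹' {n}) hpair huni hh
    refine ⟨X, hXU, fun x hx y hy hxy => ?_⟩
    exact hX (h x) ⟨hx, rfl⟩ ⟨hy, hxy.symm⟩
  obtain ⟨Xf, hXfU, hXf⟩ := key f hf
  obtain ⟨Xg, hXgU, hXg⟩ := key g hg
  by_cases hEq : {x | f x = g x} ∈ U
  · exact ⟨_, hEq, fun x hx => hx⟩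
  exfalso
  have hD : {x | f x = g x}ᶜ ∈ U := Ultrafilter.compl_mem_iff_notMem.mpr hEq
  set Y : Set ℕ := Xf ∩ Xg ∩ {x | f x = g x}ᶜ with hY
  have hYU : Y ∈ U := Filter.inter_mem (Filter.inter_mem hXfU hXgU) hD
  have hYne : ∀ x ∈ Y, f x ≠ g x := fun x hx => hx.2
  have hYf : ∀ x ∈ Y, ∀ y ∈ Y, f x = f y → x = y :=
    fun x hx y hy => hXf x hx.1.1 y hy.1.1
  have hYg : ∀ x ∈ Y, ∀ y ∈ Y, g x = g y → x = y :=
    fun x hx y hy => hXg x hx.1.2 y hy.1.2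
  set adj : ℕ → ℕ → Prop :=
    fun x y => x ∈ Y ∧ y ∈ Y ∧ x ≠ y ∧ (f x = g y ∨ g x = f y) with hadjdef
  obtain ⟨c, hcol⟩ := exists_coloring adj
    (fun m n h => ⟨h.2.1, h.1, h.2.2.1.symm, h.2.2.2.symm.imp Eq.symm Eq.symm⟩)
    (fun n h => h.2.2.1 rfl)
    (by
      intro n
      by_cases hn : n ∈ Y
      · set N1 : Set ℕ := {y | y ∈ Y ∧ g y = f n} with hN1
        set N2 : Set ℕ := {y | y ∈ Y ∧ f y = g n} with hN2
        have hN1s : N1.Subsingleton := fun a ha b hb =>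
          hYg a ha.1 b hb.1 (ha.2.trans hb.2.symm)
        have hN2s : N2.Subsingleton := fun a ha b hb =>
          hYf a ha.1 b hb.1 (ha.2.trans hb.2.symm)
        obtain ⟨a, haN⟩ : ∃ a, N1 ⊆ {a} := by
          rcases hN1s.eq_empty_or_singleton with h | ⟨a, h⟩
          · exact ⟨0, by rw [h]; exact Set.empty_subset _⟩
          · exact ⟨a, by rw [h]⟩
        obtain ⟨b, hbN⟩ : ∃ b, N2 ⊆ {b} := by
          rcases hN2s.eq_empty_or_singleton with h | ⟨b, h⟩
          · exact ⟨0, by rw [h]; exact Set.empty_subset _⟩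
          · exact ⟨b, by rw [h]⟩
        refine ⟨a, b, fun m hm => ?_⟩
        rcases hm.2.2.2 with h | h
        · exact Or.inl (haN ⟨hm.2.1, h.symm⟩)
        · exact Or.inr (hbN ⟨hm.2.1, h.symm⟩)
      · exact ⟨0, 0, fun m hm => absurd hm.1 hn⟩)
  have hexi : ∃ i : Fin 3, {x | c x = i} ∈ U := by
    have huniv : {x | c x = 0} ∪ ({x | c x = 1} ∪ {x | c x = 2}) ∈ U := by
      have : {x : ℕ | c x = 0} ∪ ({x | c x = 1} ∪ {x | c x = 2}) = Set.univ := by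
        ext x
        have : ∀ v : Fin 3, v = 0 ∨ v = 1 ∨ v = 2 := by decide
        simpa using this (c x)
      rw [this]
      exact Filter.univ_mem
    rcases (Ultrafilter.union_mem_iff.mp huniv) with h | h
    · exact ⟨0, h⟩
    · rcases (Ultrafilter.union_mem_iff.mp h) with h | h
      · exact ⟨1, h⟩
      · exact ⟨2, h⟩
  obtain ⟨i, hi⟩ := hexi
  set Z : Set ℕ := Y ∩ {x | c x = i} with hZ
  have hZU : Z ∈ U := Filter.inter_mem hYU hi
  have hfZ : f '' Z ∈ Ultrafilter.map f U := by
    rw [Ultrafilter.mem_map]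
    exact Filter.mem_of_superset hZU (Set.subset_preimage_image f Z)
  have hgZ : g '' Z ∈ Ultrafilter.map f U := by
    rw [hmap, Ultrafilter.mem_map]
    exact Filter.mem_of_superset hZU (Set.subset_preimage_image g Z)
  obtain ⟨t, htf, htg⟩ := Ultrafilter.nonempty_of_mem (Filter.inter_mem hfZ hgZ)
  obtain ⟨x, hxZ, hfx⟩ := htf
  obtain ⟨y, hyZ, hgy⟩ := htg
  by_cases hxy : x = y
  · subst hxy
    exact hYne x hxZ.1 (hfx.trans hgy.symm)
  · have hadj : adj x y := ⟨hxZ.1, hyZ.1, hxy, Or.inl (hfx.trans hgy.symm)⟩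
    exact hcol x y hadj (hxZ.2.trans hyZ.2.symm)
end

section
/- Every weakly Hausdorff p-point ultrafilter on ℕ is Hausdorff. -/
/-- A nonprincipal ultrafilter `U` on `ℕ` is a p-point if for every countable
family of members of `U` there is a member of `U` almost contained in each. -/
def IsPPoint (U : Ultrafilter ℕ) : Prop :=
  (∀ n : ℕ, U ≠ pure n) ∧
  ∀ Xs : ℕ → Set ℕ, (∀ n, Xs n ∈ U) → ∃ X ∈ U, ∀ n, (X \ Xs n).Finite

/-- Every weakly Hausdorff p-point ultrafilter on `ℕ` is Hausdorff. -/
theorem isHausdorff_of_weaklyHausdorff_pPoint (U : Ultrafilter ℕ)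
    (hP : IsPPoint U) (hW : IsWeaklyHausdorffUltra U) :
    IsHausdorffUltra U := by
  classical
  intro f g hfg
  -- Dichotomy from the p-point property: any function is either constant on a
  -- member of U, or has finite fibers when restricted to a member of U.
  have dich : ∀ h : ℕ → ℕ, (∃ c, h ⁻¹' {c} ∈ U) ∨
      ∃ X ∈ U, ∀ n, (X ∩ h ⁻¹' {n}).Finite := by
    intro h
    by_cases hc : ∃ c, h ⁻¹' {c} ∈ U
    · exact Or.inl hc
    · push_neg at hc
      obtain ⟨X, hX, hXfin⟩ := hP.2 (fun n => (h ⁻¹' {n})ᶜ)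
        (fun n => (Ultrafilter.compl_mem_iff_notMem).2 (hc n))
      refine Or.inr ⟨X, hX, fun n => ?_⟩
      have := hXfin n
      simpa [Set.diff_eq] using this
  -- helper for the constant case
  have const_case : ∀ (f g : ℕ → ℕ), Ultrafilter.map f U = Ultrafilter.map g U →
      ∀ c, f ⁻¹' {c} ∈ U → ∃ X ∈ U, ∀ x ∈ X, f x = g x := by
    classical
  intro f g hfg c hc
    have hg : g ⁻¹' {c} ∈ U := by
      have h1 : ({c} : Set ℕ) ∈ Ultrafilter.map f U := Ultrafilter.mem_map.2 hc
      rw [hfg] at h1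
      exact Ultrafilter.mem_map.1 h1
    refine ⟨f ⁻¹' {c} ∩ g ⁻¹' {c}, U.toFilter.inter_mem hc hg, fun x hx => ?_⟩
    have h1 : f x = c := hx.1
    have h2 : g x = c := hx.2
    rw [h1, h2]
  rcases dich f with ⟨c, hc⟩ | ⟨X, hX, hXfin⟩
  · exact const_case f g hfg c hc
  rcases dich g with ⟨c, hc⟩ | ⟨Y, hY, hYfin⟩
  · obtain ⟨Z, hZ, hZeq⟩ := const_case g f hfg.symm c hc
    exact ⟨Z, hZ, fun x hx => (hZeq x hx).symm⟩
  -- both finite-to-one on members of U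
  set f' : ℕ → ℕ := fun x => if x ∈ X then f x else x with hf'def
  set g' : ℕ → ℕ := fun x => if x ∈ Y then g x else x with hg'def
  have hf'fto : FinToOne f' := by
    intro n
    apply Set.Finite.subset (((hXfin n).union (Set.finite_singleton n)))
    intro x hx
    simp only [Set.mem_preimage, Set.mem_singleton_iff, hf'def] at hx
    by_cases hxX : x ∈ X
    · left; rw [if_pos hxX] at hx; exact ⟨hxX, hx⟩
    · right; rw [if_neg hxX] at hx; exact hx
  have hg'fto : FinToOne g' := by
    intro n
    apply Set.Finite.subset (((hYfin n).union (Set.finite_singleton n)))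
    intro x hx
    simp only [Set.mem_preimage, Set.mem_singleton_iff, hg'def] at hx
    by_cases hxY : x ∈ Y
    · left; rw [if_pos hxY] at hx; exact ⟨hxY, hx⟩
    · right; rw [if_neg hxY] at hx; exact hx
  have hmapf : Ultrafilter.map f' U = Ultrafilter.map f U := by
    apply Ultrafilter.coe_injective
    rw [Ultrafilter.coe_map, Ultrafilter.coe_map]
    apply Filter.map_congr
    filter_upwards [hX] with x hx
    simp [hf'def, hx]
  have hmapg : Ultrafilter.map g' U = Ultrafilter.map g U := by
    apply Ultrafilter.coe_injective
    rw [Ultrafilter.coe_map, Ultrafilter.coe_map]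
    apply Filter.map_congr
    filter_upwards [hY] with x hx
    simp [hg'def, hx]
  obtain ⟨Z, hZ, hZeq⟩ := hW f' g' hf'fto hg'fto (by rw [hmapf, hmapg, hfg])
  refine ⟨Z ∩ X ∩ Y, U.toFilter.inter_mem (U.toFilter.inter_mem hZ hX) hY,
    fun x hx => ?_⟩
  have h1 := hZeq x hx.1.1
  simp only [hf'def, hg'def, if_pos hx.1.2, if_pos hx.2] at h1
  exact h1
end

section
/- If U is a Hausdorff ultrafilter on ℕ and h : ℕ → ℕ is finite-to-one, then h(U) is also Hausdorff. -/
/-- A finite-to-one pushforward of a Hausdorff ultrafilter is Hausdorff. -/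
theorem isHausdorff_map (U : Ultrafilter ℕ) (hU : IsHausdorffUltra U)
    (h : ℕ → ℕ) (hh : FinToOne h) :
    IsHausdorffUltra (Ultrafilter.map h U) := by
  intro f g hfg
  rw [Ultrafilter.map_map, Ultrafilter.map_map] at hfg
  obtain ⟨X, hX, hXeq⟩ := hU (f ∘ h) (g ∘ h) hfg
  refine ⟨h '' X, ?_, ?_⟩
  · rw [Ultrafilter.mem_map]
    exact U.mem_of_superset hX (Set.subset_preimage_image h X)
  · rintro y ⟨x, hx, rfl⟩
    exact hXeq x hx
end

section
/- There do not exist k ∈ ℕ and sets A_i, B_i ⊆ ℕ (i < k) with A_i ∩ B_i = ∅ for all i < k such that {(m,n) ∈ ℕ × ℕ : m ≠ n} ⊆ ⋃_{i<k} A_i × B_i. -/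
open Classical in

lemma rect_cover_card_bound : ∀ (k : ℕ) (A B : ℕ → Set ℕ),
    (∀ i < k, A i ∩ B i = ∅) →
    ∀ S : Finset ℕ,
      (∀ m ∈ S, ∀ n ∈ S, m ≠ n → ∃ i < k, m ∈ A i ∧ n ∈ B i) →
      S.card ≤ 2 ^ k := by
  intro k
  induction k with
  | zero =>
      intro A B _ S h
      by_contra hc
      push_neg at hc
      obtain ⟨m, hm, n, hn, hmn⟩ := Finset.one_lt_card.mp hc
      obtain ⟨i, hi, _⟩ := h m hm n hn hmn
      exact Nat.not_lt_zero i hi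
  | succ k ih =>
      intro A B hdisj S h
      set S1 := S.filter (fun x => x ∉ A k) with hS1
      set S2 := S.filter (fun x => x ∉ B k) with hS2
      have hb1 : S1.card ≤ 2 ^ k := by
        apply ih A B (fun i hi => hdisj i (Nat.lt_succ_of_lt hi))
        intro m hm n hn hmn
        obtain ⟨hmS, hmA⟩ := Finset.mem_filter.mp hm
        obtain ⟨hnS, _⟩ := Finset.mem_filter.mp hn
        obtain ⟨i, hi, hma, hnb⟩ := h m hmS n hnS hmn
        rcases Nat.lt_succ_iff_lt_or_eq.mp hi with hi' | rfl
        · exact ⟨i, hi', hma, hnb⟩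
        · exact absurd hma hmA
      have hb2 : S2.card ≤ 2 ^ k := by
        apply ih A B (fun i hi => hdisj i (Nat.lt_succ_of_lt hi))
        intro m hm n hn hmn
        obtain ⟨hmS, _⟩ := Finset.mem_filter.mp hm
        obtain ⟨hnS, hnB⟩ := Finset.mem_filter.mp hn
        obtain ⟨i, hi, hma, hnb⟩ := h m hmS n hnS hmn
        rcases Nat.lt_succ_iff_lt_or_eq.mp hi with hi' | rfl
        · exact ⟨i, hi', hma, hnb⟩
        · exact absurd hnb hnB
      have hsub : S ⊆ S1 ∪ S2 := by
        intro x hx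
        rcases Classical.em (x ∈ A k) with hA | hA
        · have : x ∉ B k := by
            intro hB
            have := hdisj k (Nat.lt_succ_self k)
            exact absurd (Set.mem_inter hA hB) (by simp [this])
          exact Finset.mem_union_right _ (Finset.mem_filter.mpr ⟨hx, this⟩)
        · exact Finset.mem_union_left _ (Finset.mem_filter.mpr ⟨hx, hA⟩)
      calc S.card ≤ (S1 ∪ S2).card := Finset.card_le_card hsub
        _ ≤ S1.card + S2.card := Finset.card_union_le _ _
        _ ≤ 2 ^ k + 2 ^ k := Nat.add_le_add hb1 hb2
        _ = 2 ^ (k + 1) := by ring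

/-- The off-diagonal of `ℕ × ℕ` cannot be covered by finitely many rectangles
`A i ×ˢ B i` with `A i ∩ B i = ∅`. -/
theorem no_finite_disjoint_rectangle_cover :
    ¬ ∃ (k : ℕ) (A B : ℕ → Set ℕ),
      (∀ i < k, A i ∩ B i = ∅) ∧
      {p : ℕ × ℕ | p.1 ≠ p.2} ⊆ ⋃ i < k, A i ×ˢ B i := by
  rintro ⟨k, A, B, hdisj, hcov⟩
  have hbound := rect_cover_card_bound k A B hdisj (Finset.range (2 ^ k + 1)) ?_
  · simp at hbound
  · intro m _ n _ hmn
    have := hcov (show ((m, n) : ℕ × ℕ) ∈ {p : ℕ × ℕ | p.1 ≠ p.2} from hmn)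
    simp only [Set.mem_iUnion, Set.mem_prod] at this
    obtain ⟨i, hi, h1, h2⟩ := this
    exact ⟨i, hi, h1, h2⟩
end

section
/- For every n ∈ ℕ there exists N ∈ ℕ such that for every finite set I ⊆ ℕ with |I| ≥ N one has nor_I([I]²) ≥ n; in other words, nor_I([I]²) tends to infinity as |I| tends to infinity. -/
/-- `offDiagSq I = [I]² = (I × I) \ Δ`, the off-diagonal part of the square of `I`. -/
def offDiagSq (I : Set ℕ) : Set (ℕ × ℕ) := (I ×ˢ I) \ {p : ℕ × ℕ | p.1 = p.2}

/-- `nor X` is the least `k` such that `X` can be covered by `k` rectangles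
`A i ×ˢ B i` with `A i ∩ B i = ∅`. -/
noncomputable def nor (X : Set (ℕ × ℕ)) : ℕ :=
  sInf {k : ℕ | ∃ A B : ℕ → Set ℕ,
    (∀ i < k, A i ∩ B i = ∅) ∧ X ⊆ ⋃ i < k, A i ×ˢ B i}

/-- Key counting lemma: if `[I]²` is covered by `k` disjoint rectangles, then
`|I| ≤ 2^k`. -/
lemma key_count {k : ℕ} {I : Set ℕ} (hI : I.Finite) {A B : ℕ → Set ℕ}
    (hd : ∀ i < k, A i ∩ B i = ∅)
    (hc : offDiagSq I ⊆ ⋃ i < k, A i ×ˢ B i) : I.ncard ≤ 2 ^ k := by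
  classical
  set f : ℕ → (Fin k → Bool) := fun x i => decide (x ∈ A i.val) with hf
  have hinj : Set.InjOn f I := by
    intro x hx y hy hxy
    by_contra hne
    have hmem : (x, y) ∈ offDiagSq I := ⟨⟨hx, hy⟩, hne⟩
    have hcov := hc hmem
    simp only [Set.mem_iUnion] at hcov
    obtain ⟨i, hik, hxA, hyB⟩ :
        ∃ i, ∃ _ : i < k, x ∈ A i ∧ y ∈ B i := by
      obtain ⟨i, hik, h⟩ := hcov
      exact ⟨i, hik, h.1, h.2⟩
    have hyA : y ∉ A i := fun h =>
      (Set.eq_empty_iff_forall_notMem.mp (hd i hik) y) ⟨h, hyB⟩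
    have := congrFun hxy ⟨i, hik⟩
    simp [hf, hxA, hyA] at this
  have h1 : I.ncard = (f '' I).ncard := (Set.ncard_image_of_injOn hinj).symm
  have h2 : (f '' I).ncard ≤ (Set.univ : Set (Fin k → Bool)).ncard :=
    Set.ncard_le_ncard (Set.subset_univ _) Set.finite_univ
  have h3 : (Set.univ : Set (Fin k → Bool)).ncard = 2 ^ k := by
    rw [Set.ncard_univ]
    simp [Nat.card_eq_fintype_card]
  omega

lemma nor_set_nonempty {I : Set ℕ} (hI : I.Finite) :
    {k : ℕ | ∃ A B : ℕ → Set ℕ,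
      (∀ i < k, A i ∩ B i = ∅) ∧ offDiagSq I ⊆ ⋃ i < k, A i ×ˢ B i}.Nonempty := by
  classical
  set L := hI.toFinset.toList with hL
  refine ⟨L.length, fun i => {x | ∃ h : i < L.length, x = L.get ⟨i, h⟩},
    fun i => {x | ∃ h : i < L.length, x = L.get ⟨i, h⟩}ᶜ, fun i _ => Set.inter_compl_self _, ?_⟩
  rintro ⟨x, y⟩ ⟨⟨hx, _⟩, hne⟩
  have hxL : x ∈ L := by
    rw [hL, Finset.mem_toList, Set.Finite.mem_toFinset]
    exact hx
  obtain ⟨⟨i, hi⟩, hget⟩ := List.get_of_mem hxL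
  simp only [Set.mem_iUnion, Set.mem_prod]
  refine ⟨i, hi, ⟨hi, hget.symm⟩, ?_⟩
  rintro ⟨h, hy⟩
  exact hne (by simp only [Set.mem_setOf_eq] at hne ⊢; rw [hy, hget])

/-- `nor ([I]²)` tends to infinity as `|I|` tends to infinity. -/
theorem nor_offDiagSq_tendsto_atTop :
    ∀ n : ℕ, ∃ N : ℕ, ∀ I : Set ℕ, I.Finite → N ≤ I.ncard →
      n ≤ nor (offDiagSq I) := by
  intro n
  refine ⟨2 ^ n, fun I hI hN => ?_⟩
  have hmem := Nat.sInf_mem (nor_set_nonempty hI)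
  obtain ⟨A, B, hd, hc⟩ := hmem
  have hcount := key_count hI hd hc
  have h2 : (2 : ℕ) ^ n ≤ 2 ^ nor (offDiagSq I) := le_trans hN hcount
  exact (Nat.pow_le_pow_iff_right (by norm_num)).mp h2
end

section
/- Let I ⊆ ℕ be finite, Z ⊆ I, and X ⊆ [I]² with nor_I(X) > 2. Then nor_I([Z]² ∩ X) ≥ nor_I(X)/2 − 1 or nor_I([I ∖ Z]² ∩ X) ≥ nor_I(X)/2 − 1 (equivalently, 2·nor_I([Z]² ∩ X) + 2 ≥ nor_I(X) or 2·nor_I([I ∖ Z]² ∩ X) + 2 ≥ nor_I(X)). -/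
/-!
Every pair of `X` with both coordinates in `Z`, resp. in `I \ Z`, is covered by an optimal cover
of `[Z]² ∩ X`, resp. of `[I \ Z]² ∩ X`; every other pair lies in one of the two disjoint
rectangles `Z × (I \ Z)` and `(I \ Z) × Z`. Hence `nor X` is at most the sum of the two norms
plus two, and the larger of the two norms is at least `(nor X - 2) / 2`.
-/

def HasRectCover (X : Set (ℕ × ℕ)) (k : ℕ) : Prop :=
  ∃ A B : ℕ → Set ℕ, (∀ i < k, A i ∩ B i = ∅) ∧ X ⊆ ⋃ i < k, A i ×ˢ B i

namespace HasRectCover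

variable {X Y : Set (ℕ × ℕ)} {k l : ℕ}

theorem mono (h : HasRectCover Y k) (hXY : X ⊆ Y) : HasRectCover X k :=
  let ⟨A, B, hAB, hY⟩ := h
  ⟨A, B, hAB, hXY.trans hY⟩

theorem prod {A B : Set ℕ} (hAB : A ∩ B = ∅) : HasRectCover (A ×ˢ B) 1 :=
  ⟨fun _ => A, fun _ => B, fun _ _ => hAB, fun _ hp => Set.mem_biUnion Nat.zero_lt_one hp⟩

theorem union (hX : HasRectCover X k) (hY : HasRectCover Y l) :
    HasRectCover (X ∪ Y) (k + l) := by
  classical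
  obtain ⟨A, B, hAB, hXcov⟩ := hX
  obtain ⟨A', B', hAB', hYcov⟩ := hY
  refine ⟨fun i => if i < k then A i else A' (i - k),
    fun i => if i < k then B i else B' (i - k), fun i hi => ?_, ?_⟩
  · dsimp only
    split_ifs with h
    · exact hAB i h
    · exact hAB' (i - k) (by omega)
  · rintro p (hp | hp)
    · obtain ⟨i, hi, hpi⟩ := Set.mem_iUnion₂.mp (hXcov hp)
      exact Set.mem_biUnion (by omega : i < k + l) (by simpa [hi] using hpi)
    · obtain ⟨i, hi, hpi⟩ := Set.mem_iUnion₂.mp (hYcov hp)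
      refine Set.mem_biUnion (by omega : k + i < k + l) ?_
      simpa [show ¬k + i < k by omega] using hpi

end HasRectCover

-- Needed because `nor X = sInf ∅ = 0` when `X` has no cover at all.
theorem exists_hasRectCover {X : Set (ℕ × ℕ)} (hfin : X.Finite) (hX : ∀ p ∈ X, p.1 ≠ p.2) :
    ∃ k, HasRectCover X k := by
  induction X, hfin using Set.Finite.induction_on with
  | empty => exact ⟨0, ⟨fun _ => ∅, fun _ => ∅, by simp, by simp⟩⟩
  | @insert p s _ _ ih =>
    obtain ⟨k, hk⟩ := ih fun q hq => hX q (Set.mem_insert_of_mem p hq)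
    have hp : {p.1} ∩ {p.2} = (∅ : Set ℕ) :=
      Set.singleton_inter_eq_empty.mpr (hX p (Set.mem_insert p s))
    refine ⟨1 + k, ((HasRectCover.prod hp).union hk).mono ?_⟩
    rw [Set.insert_eq]
    exact Set.union_subset_union_left s (by simp)

theorem nor_le_of_hasRectCover {X : Set (ℕ × ℕ)} {k : ℕ} (h : HasRectCover X k) : nor X ≤ k :=
  Nat.sInf_le h

theorem hasRectCover_nor {X : Set (ℕ × ℕ)} {k : ℕ} (h : HasRectCover X k) :
    HasRectCover X (nor X) :=
  Nat.sInf_mem (s := {k | HasRectCover X k}) ⟨k, h⟩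

theorem subset_offDiagSq_split {I Z : Set ℕ} {X : Set (ℕ × ℕ)} (hX : X ⊆ offDiagSq I) :
    X ⊆ (offDiagSq Z ∩ X ∪ offDiagSq (I \ Z) ∩ X) ∪ (Z ×ˢ (I \ Z) ∪ (I \ Z) ×ˢ Z) := by
  intro p hp
  obtain ⟨⟨h1, h2⟩, hne⟩ := hX hp
  by_cases hz1 : p.1 ∈ Z <;> by_cases hz2 : p.2 ∈ Z <;>
    simp_all [offDiagSq]

theorem nor_le_nor_inter_add_nor_inter_add_two {I : Set ℕ} (hI : I.Finite) (Z : Set ℕ)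
    {X : Set (ℕ × ℕ)} (hX : X ⊆ offDiagSq I) :
    nor X ≤ nor (offDiagSq Z ∩ X) + nor (offDiagSq (I \ Z) ∩ X) + 2 := by
  obtain ⟨k, hk⟩ := exists_hasRectCover ((hI.prod hI).subset fun p hp => (hX hp).1)
    fun p hp => (hX hp).2
  have hZ := hasRectCover_nor (hk.mono Set.inter_subset_right : HasRectCover (offDiagSq Z ∩ X) k)
  have hIZ := hasRectCover_nor
    (hk.mono Set.inter_subset_right : HasRectCover (offDiagSq (I \ Z) ∩ X) k)
  have hcross : HasRectCover (Z ×ˢ (I \ Z) ∪ (I \ Z) ×ˢ Z) (1 + 1) :=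
    (HasRectCover.prod (Set.inter_sdiff_self Z I)).union (HasRectCover.prod Set.sdiff_inter_self)
  exact nor_le_of_hasRectCover (((hZ.union hIZ).union hcross).mono (subset_offDiagSq_split hX))

theorem nor_split_half_general (I : Set ℕ) (hI : I.Finite) (Z : Set ℕ)
    (X : Set (ℕ × ℕ)) (hX : X ⊆ offDiagSq I) :
    2 * nor (offDiagSq Z ∩ X) + 2 ≥ nor X ∨
    2 * nor (offDiagSq (I \ Z) ∩ X) + 2 ≥ nor X := by
  have := nor_le_nor_inter_add_nor_inter_add_two hI Z hX
  omega

/-- If `nor X > 2` then one of the two halves obtained by splitting `I` into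
`Z` and `I \ Z` keeps norm at least `nor X / 2 - 1`, i.e.
`2 * nor (half) + 2 ≥ nor X`. -/
theorem nor_split_half (I : Set ℕ) (hI : I.Finite) (Z : Set ℕ) (hZ : Z ⊆ I)
    (X : Set (ℕ × ℕ)) (hX : X ⊆ offDiagSq I) (hnor : 2 < nor X) :
    2 * nor (offDiagSq Z ∩ X) + 2 ≥ nor X ∨
    2 * nor (offDiagSq (I \ Z) ∩ X) + 2 ≥ nor X :=
  nor_split_half_general I hI Z X hX
end

section
/- Let (I_k)_{k∈ℕ} be a sequence of pairwise disjoint finite subsets of ℕ with |I_k| → ∞, and let D = ⋃_k [I_k]² ⊆ ℕ × ℕ. Then the collection ℐ = {X ⊆ D : limsup_k nor_{I_k}(X ∩ [I_k]²) < ∞} (equivalently, those X with sup_k nor_{I_k}(X ∩ [I_k]²) finite) is a proper ideal on D containing all finite subsets of D: ℐ is closed under taking subsets and finite unions, every finite subset of D belongs to ℐ, and D ∉ ℐ. -/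
section RectCoverable

variable {α : Type*}

def RectCoverable (X : Set (α × α)) (k : ℕ) : Prop :=
  ∃ A B : ℕ → Set α, (∀ i < k, A i ∩ B i = ∅) ∧ X ⊆ ⋃ i < k, A i ×ˢ B i

theorem RectCoverable.mono {X Y : Set (α × α)} {k : ℕ} (h : RectCoverable X k) (hYX : Y ⊆ X) :
    RectCoverable Y k :=
  let ⟨A, B, hAB, hX⟩ := h
  ⟨A, B, hAB, hYX.trans hX⟩

theorem RectCoverable.union {X Y : Set (α × α)} {k l : ℕ} (hX : RectCoverable X k)
    (hY : RectCoverable Y l) : RectCoverable (X ∪ Y) (k + l) := by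
  obtain ⟨A₁, B₁, hAB₁, hX⟩ := hX
  obtain ⟨A₂, B₂, hAB₂, hY⟩ := hY
  refine ⟨fun i => if i < k then A₁ i else A₂ (i - k),
    fun i => if i < k then B₁ i else B₂ (i - k), fun i hi => ?_, ?_⟩
  · by_cases hik : i < k
    · simp [hik, hAB₁ i hik]
    · simp [hik, hAB₂ (i - k) (by omega)]
  · rintro p (hp | hp)
    · obtain ⟨i, hik, hp⟩ := Set.mem_iUnion₂.mp (hX hp)
      exact Set.mem_iUnion₂.mpr ⟨i, by omega, by simpa [hik] using hp⟩
    · obtain ⟨j, hjl, hp⟩ := Set.mem_iUnion₂.mp (hY hp)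
      exact Set.mem_iUnion₂.mpr ⟨k + j, by omega, by simpa using hp⟩

theorem rectCoverable_empty : RectCoverable (∅ : Set (α × α)) 0 :=
  ⟨fun _ => ∅, fun _ => ∅, by simp, by simp⟩

theorem rectCoverable_singleton {p : α × α} (hp : p.1 ≠ p.2) : RectCoverable {p} 1 :=
  ⟨fun _ => {p.1}, fun _ => {p.2}, by simp [hp], by simp⟩

theorem Set.Finite.rectCoverable_ncard {X : Set (α × α)} (hX : X.Finite)
    (hoff : ∀ p ∈ X, p.1 ≠ p.2) : RectCoverable X X.ncard := by
  induction X, hX using Set.Finite.induction_on with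
  | empty => simpa using rectCoverable_empty
  | @insert p X hpX hX ih =>
    rw [Set.ncard_insert_of_notMem hpX hX, Set.insert_eq, add_comm]
    exact (rectCoverable_singleton (hoff p (Set.mem_insert p X))).union
      (ih fun q hq => hoff q (Set.mem_insert_of_mem p hq))

theorem Set.ncard_le_two_pow_of_rectCoverable {S : Set α} {k : ℕ}
    (h : RectCoverable ((S ×ˢ S) \ {p : α × α | p.1 = p.2}) k) : S.ncard ≤ 2 ^ k := by
  obtain ⟨A, B, hAB, hcov⟩ := h
  have hinj : Set.InjOn (fun x => {i : Fin k | x ∈ A i}) S := by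
    intro x hx y hy hxy
    by_contra hne
    obtain ⟨i, hik, hxA, hyB⟩ := Set.mem_iUnion₂.mp (hcov (show (x, y) ∈ _ from ⟨⟨hx, hy⟩, hne⟩))
    have hyA : y ∈ A i := by
      have : (⟨i, hik⟩ : Fin k) ∈ {i : Fin k | x ∈ A i} := hxA
      exact (Set.ext_iff.mp hxy _).mp this
    exact (Set.eq_empty_iff_forall_notMem.mp (hAB i hik) y) ⟨hyA, hyB⟩
  calc S.ncard ≤ (Set.univ : Set (Set (Fin k))).ncard :=
        Set.ncard_le_ncard_of_injOn _ (fun _ _ => Set.mem_univ _) hinj Set.finite_univ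
    _ = 2 ^ k := by simp [Set.ncard_univ]

end RectCoverable

theorem nor_le {X : Set (ℕ × ℕ)} {k : ℕ} (h : RectCoverable X k) : nor X ≤ k :=
  Nat.sInf_le h

theorem rectCoverable_nor {X : Set (ℕ × ℕ)} (h : ∃ k, RectCoverable X k) :
    RectCoverable X (nor X) :=
  Nat.sInf_mem h

theorem nor_mono {X Y : Set (ℕ × ℕ)} (hX : ∃ k, RectCoverable X k) (hYX : Y ⊆ X) :
    nor Y ≤ nor X :=
  nor_le ((rectCoverable_nor hX).mono hYX)

theorem nor_union_le {X Y : Set (ℕ × ℕ)} (hX : ∃ k, RectCoverable X k)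
    (hY : ∃ k, RectCoverable Y k) : nor (X ∪ Y) ≤ nor X + nor Y :=
  nor_le ((rectCoverable_nor hX).union (rectCoverable_nor hY))

theorem nor_le_ncard {X : Set (ℕ × ℕ)} (hX : X.Finite) (hoff : ∀ p ∈ X, p.1 ≠ p.2) :
    nor X ≤ X.ncard :=
  nor_le (hX.rectCoverable_ncard hoff)

theorem exists_rectCoverable_of_subset_offDiagSq {S : Set ℕ} (hS : S.Finite)
    {X : Set (ℕ × ℕ)} (hX : X ⊆ offDiagSq S) : ∃ k, RectCoverable X k :=
  ⟨_, ((hS.prod hS).subset fun _ hp => (hX hp).1).rectCoverable_ncard fun _ hp => (hX hp).2⟩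

theorem ncard_le_two_pow_nor_offDiagSq {S : Set ℕ} (hS : S.Finite) :
    S.ncard ≤ 2 ^ nor (offDiagSq S) :=
  Set.ncard_le_two_pow_of_rectCoverable
    (rectCoverable_nor (exists_rectCoverable_of_subset_offDiagSq hS subset_rfl))

theorem boundedNorm_is_proper_ideal_general (I : ℕ → Set ℕ)
    (hfin : ∀ k, (I k).Finite)
    (hcard : Filter.Tendsto (fun k => (I k).ncard) Filter.atTop Filter.atTop)
    (D : Set (ℕ × ℕ)) (hD : D = ⋃ k, offDiagSq (I k))
    (J : Set (Set (ℕ × ℕ)))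
    (hJ : J = {X | X ⊆ D ∧ ∃ m : ℕ, ∀ k, nor (X ∩ offDiagSq (I k)) ≤ m}) :
    (∀ X ∈ J, ∀ Y ⊆ X, Y ∈ J) ∧
    (∀ X ∈ J, ∀ Y ∈ J, X ∪ Y ∈ J) ∧
    (∀ X ⊆ D, X.Finite → X ∈ J) ∧
    D ∉ J := by
  subst hJ
  have hcov (X : Set (ℕ × ℕ)) (k : ℕ) : ∃ n, RectCoverable (X ∩ offDiagSq (I k)) n :=
    exists_rectCoverable_of_subset_offDiagSq (hfin k) Set.inter_subset_right
  refine ⟨?_, ?_, ?_, ?_⟩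
  · rintro X ⟨hXD, m, hm⟩ Y hYX
    exact ⟨hYX.trans hXD, m, fun k =>
      (nor_mono (hcov X k) (Set.inter_subset_inter_left _ hYX)).trans (hm k)⟩
  · rintro X ⟨hXD, m, hm⟩ Y ⟨hYD, m', hm'⟩
    refine ⟨Set.union_subset hXD hYD, m + m', fun k => ?_⟩
    rw [Set.union_inter_distrib_right]
    exact (nor_union_le (hcov X k) (hcov Y k)).trans (add_le_add (hm k) (hm' k))
  · intro X hXD hX
    exact ⟨hXD, X.ncard, fun k => (nor_le_ncard (hX.inter_of_left _) fun p hp => hp.2.2).trans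
      (Set.ncard_le_ncard Set.inter_subset_left hX)⟩
  · rintro ⟨-, m, hm⟩
    obtain ⟨k, hk⟩ := (hcard.eventually_gt_atTop (2 ^ m)).exists
    have hDk : D ∩ offDiagSq (I k) = offDiagSq (I k) :=
      Set.inter_eq_right.mpr (hD ▸ Set.subset_iUnion (fun k => offDiagSq (I k)) k)
    have hnor : nor (offDiagSq (I k)) ≤ m := hDk ▸ hm k
    have := (ncard_le_two_pow_nor_offDiagSq (hfin k)).trans (Nat.pow_le_pow_right two_pos hnor)
    omega

/-- The collection of subsets of `D = ⋃ₖ [Iₖ]²` whose traces on the `[Iₖ]²`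
have bounded norms is a proper ideal containing all finite subsets of `D`. -/
theorem boundedNorm_is_proper_ideal (I : ℕ → Set ℕ)
    (hfin : ∀ k, (I k).Finite)
    (hdisj : Pairwise (Function.onFun Disjoint I))
    (hcard : Filter.Tendsto (fun k => (I k).ncard) Filter.atTop Filter.atTop)
    (D : Set (ℕ × ℕ)) (hD : D = ⋃ k, offDiagSq (I k))
    (J : Set (Set (ℕ × ℕ)))
    (hJ : J = {X | X ⊆ D ∧ ∃ m : ℕ, ∀ k, nor (X ∩ offDiagSq (I k)) ≤ m}) :
    (∀ X ∈ J, ∀ Y ⊆ X, Y ∈ J) ∧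
    (∀ X ∈ J, ∀ Y ∈ J, X ∪ Y ∈ J) ∧
    (∀ X ⊆ D, X.Finite → X ∈ J) ∧
    D ∉ J :=
  boundedNorm_is_proper_ideal_general I hfin hcard D hD J hJ
end

section
/- Let (I_k)_{k∈ℕ} be a sequence of pairwise disjoint finite subsets of ℕ and let D = ⋃_k [I_k]² ⊆ ℕ × ℕ. Let π₀, π₁ : D → ℕ be the two coordinate projections. If U is an ultrafilter on D such that for every X ∈ U, sup_k nor_{I_k}(X ∩ [I_k]²) = ∞, then π₀(x) ≠ π₁(x) for every x ∈ D, yet π₀(U) = π₁(U). -/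
lemma nor_le_one_of_subset {X : Set (ℕ × ℕ)} {S : Set ℕ}
    (h : X ⊆ S ×ˢ Sᶜ) : nor X ≤ 1 := by
  apply Nat.sInf_le
  refine ⟨fun _ => S, fun _ => Sᶜ, fun i _ => by simp, ?_⟩
  intro p hp
  simpa using h hp

/-- If an ultrafilter on `D = ⋃ₖ [Iₖ]²` concentrates on sets of unbounded norm,
then the two coordinate projections disagree everywhere on `D` yet push the
ultrafilter forward to the same ultrafilter. -/
theorem proj_pushforwards_eq_of_unbounded_norm (I : ℕ → Set ℕ)
    (hfin : ∀ k, (I k).Finite)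
    (hdisj : Pairwise (Function.onFun Disjoint I))
    (D : Set (ℕ × ℕ)) (hD : D = ⋃ k, offDiagSq (I k))
    (U : Ultrafilter D)
    (hU : ∀ X ∈ U, ∀ n : ℕ, ∃ k, n ≤ nor ((Subtype.val '' X) ∩ offDiagSq (I k))) :
    (∀ x : D, (x : ℕ × ℕ).1 ≠ (x : ℕ × ℕ).2) ∧
    Ultrafilter.map (fun x : D => (x : ℕ × ℕ).1) U =
      Ultrafilter.map (fun x : D => (x : ℕ × ℕ).2) U := by
  constructor
  · rintro ⟨p, hp⟩
    rw [hD] at hp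
    obtain ⟨k, hk⟩ := Set.mem_iUnion.mp hp
    exact hk.2
  · by_contra h
    have key : ∀ (S : Set ℕ),
        {x : D | (x : ℕ × ℕ).1 ∈ S} ∈ U → {x : D | (x : ℕ × ℕ).2 ∈ Sᶜ} ∈ U → False := by
      intro S h1 h2
      have hX : {x : D | (x : ℕ × ℕ).1 ∈ S} ∩ {x : D | (x : ℕ × ℕ).2 ∈ Sᶜ} ∈ U :=
        Filter.inter_mem h1 h2
      obtain ⟨k, hk⟩ := hU _ hX 2
      have hsub : (Subtype.val '' ({x : D | (x : ℕ × ℕ).1 ∈ S} ∩ {x : D | (x : ℕ × ℕ).2 ∈ Sᶜ}))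
          ∩ offDiagSq (I k) ⊆ S ×ˢ Sᶜ := by
        rintro p ⟨⟨x, ⟨hx1, hx2⟩, rfl⟩, -⟩
        exact ⟨hx1, hx2⟩
      have := nor_le_one_of_subset hsub
      omega
    rw [Ultrafilter.coe_inj.symm, Filter.ext_iff] at h
    push_neg at h
    obtain ⟨S, hS⟩ := h
    simp only [Filter.mem_map, Ultrafilter.mem_coe, iff_iff_implies_and_implies, not_and_or,
      Classical.not_imp] at hS
    rcases hS with ⟨h1, h2⟩ | ⟨h1, h2⟩
    · exact key S h1 (Ultrafilter.compl_mem_iff_notMem.mpr h2)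
    · refine key Sᶜ (Ultrafilter.compl_mem_iff_notMem.mpr h1) ?_
      show {x : D | (x : ℕ × ℕ).2 ∈ Sᶜᶜ} ∈ U
      simp only [compl_compl]
      exact h2
end

section
/- There exists an ultrafilter U on ℕ that is not weakly Hausdorff (and hence not Hausdorff). -/
namespace NotWH

/-- First endpoint map: `n` coding a triple `(k, i, j)` with `i < j < k` is an edge of
the complete graph on `{pair k i : i < k}`; `fF n` is twice its smaller endpoint. -/
def fF (n : ℕ) : ℕ :=
  if n.unpair.2.unpair.1 < n.unpair.2.unpair.2 ∧ n.unpair.2.unpair.2 < n.unpair.1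
  then 2 * Nat.pair n.unpair.1 n.unpair.2.unpair.1 else 2 * n + 1

/-- Second endpoint map. -/
def gG (n : ℕ) : ℕ :=
  if n.unpair.2.unpair.1 < n.unpair.2.unpair.2 ∧ n.unpair.2.unpair.2 < n.unpair.1
  then 2 * Nat.pair n.unpair.1 n.unpair.2.unpair.2 else 2 * n + 3

lemma fF_pair {k i j : ℕ} (hij : i < j) (hjk : j < k) :
    fF (Nat.pair k (Nat.pair i j)) = 2 * Nat.pair k i := by
  simp [fF, Nat.unpair_pair, hij, hjk]

lemma gG_pair {k i j : ℕ} (hij : i < j) (hjk : j < k) :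
    gG (Nat.pair k (Nat.pair i j)) = 2 * Nat.pair k j := by
  simp [gG, Nat.unpair_pair, hij, hjk]

lemma fF_ne_gG (n : ℕ) : fF n ≠ gG n := by
  unfold fF gG
  split
  · rename_i h
    intro hEq
    have h2 : Nat.pair n.unpair.1 n.unpair.2.unpair.1
        = Nat.pair n.unpair.1 n.unpair.2.unpair.2 := by omega
    rw [Nat.pair_eq_pair] at h2
    omega
  · omega

lemma pair_le_sq (a b : ℕ) : Nat.pair a b ≤ (a + b + 1) ^ 2 := by
  unfold Nat.pair
  split <;> nlinarith

lemma le_bound_fF (n : ℕ) : n ≤ (fF n + 4 * fF n ^ 2 + 1) ^ 2 := by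
  unfold fF
  split
  · rename_i h
    set k := n.unpair.1 with hk
    set i := n.unpair.2.unpair.1
    set j := n.unpair.2.unpair.2
    have hn : n = Nat.pair k (Nat.pair i j) := by
      rw [Nat.pair_unpair, Nat.pair_unpair]
    have h1 : k ≤ 2 * Nat.pair k i :=
      le_trans (Nat.left_le_pair k i) (by omega)
    have h2 : Nat.pair i j ≤ 4 * k ^ 2 := by
      have := pair_le_sq i j
      nlinarith [h.1, h.2]
    have h3 : n ≤ (k + Nat.pair i j + 1) ^ 2 := hn ▸ pair_le_sq k (Nat.pair i j)
    set m := 2 * Nat.pair k i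
    have h4 : k + Nat.pair i j + 1 ≤ m + 4 * m ^ 2 + 1 := by nlinarith
    calc n ≤ (k + Nat.pair i j + 1) ^ 2 := h3
      _ ≤ (m + 4 * m ^ 2 + 1) ^ 2 := Nat.pow_le_pow_left h4 2
  · nlinarith

lemma le_bound_gG (n : ℕ) : n ≤ (gG n + 4 * gG n ^ 2 + 1) ^ 2 := by
  unfold gG
  split
  · rename_i h
    set k := n.unpair.1 with hk
    set i := n.unpair.2.unpair.1
    set j := n.unpair.2.unpair.2
    have hn : n = Nat.pair k (Nat.pair i j) := by
      rw [Nat.pair_unpair, Nat.pair_unpair]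
    have h1 : k ≤ 2 * Nat.pair k j :=
      le_trans (Nat.left_le_pair k j) (by omega)
    have h2 : Nat.pair i j ≤ 4 * k ^ 2 := by
      have := pair_le_sq i j
      nlinarith [h.1, h.2]
    have h3 : n ≤ (k + Nat.pair i j + 1) ^ 2 := hn ▸ pair_le_sq k (Nat.pair i j)
    set m := 2 * Nat.pair k j
    have h4 : k + Nat.pair i j + 1 ≤ m + 4 * m ^ 2 + 1 := by nlinarith
    calc n ≤ (k + Nat.pair i j + 1) ^ 2 := h3
      _ ≤ (m + 4 * m ^ 2 + 1) ^ 2 := Nat.pow_le_pow_left h4 2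
  · nlinarith

lemma finToOne_fF : FinToOne fF := by
  intro m
  apply (Set.finite_Iic ((m + 4 * m ^ 2 + 1) ^ 2)).subset
  intro n hn
  have hb := le_bound_fF n
  have : fF n = m := hn
  rw [this] at hb
  exact hb

lemma finToOne_gG : FinToOne gG := by
  intro m
  apply (Set.finite_Iic ((m + 4 * m ^ 2 + 1) ^ 2)).subset
  intro n hn
  have hb := le_bound_gG n
  have : gG n = m := hn
  rw [this] at hb
  exact hb

/-- The agreement set for a subset `A`. -/
def E (A : Set ℕ) : Set ℕ := {n | fF n ∈ A ↔ gG n ∈ A}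

lemma fip (T : Finset (Set ℕ)) (hT : (↑T : Set (Set ℕ)) ⊆ Set.range E) :
    (⋂₀ (↑T : Set (Set ℕ))).Nonempty := by
  classical
  choose A hA using fun s : {x // x ∈ T} => hT s.2
  set k := Fintype.card ({x // x ∈ T} → Bool) + 1 with hk
  set χ : Fin k → ({x // x ∈ T} → Bool) :=
    fun i s => decide (2 * Nat.pair k (↑i : ℕ) ∈ A s) with hχdef
  obtain ⟨i, j, hij, hχ⟩ := Fintype.exists_ne_map_eq_of_card_lt χ
    (by simp [hk])
  suffices main : ∀ i j : Fin k, (i : ℕ) < (j : ℕ) → χ i = χ j →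
      (⋂₀ (↑T : Set (Set ℕ))).Nonempty by
    rcases lt_trichotomy (i : ℕ) (j : ℕ) with h | h | h
    · exact main i j h hχ
    · exact absurd (Fin.ext h) hij
    · exact main j i h hχ.symm
  intro i j hlt hχ
  refine ⟨Nat.pair k (Nat.pair (↑i) (↑j)), ?_⟩
  intro s hs
  have h1 := congrFun hχ ⟨s, hs⟩
  simp only [hχdef, decide_eq_decide] at h1
  have hmem : Nat.pair k (Nat.pair (↑i) (↑j)) ∈ E (A ⟨s, hs⟩) := by
    show fF _ ∈ _ ↔ gG _ ∈ _
    rw [fF_pair hlt j.isLt, gG_pair hlt j.isLt]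
    exact h1
  rw [hA ⟨s, hs⟩] at hmem
  exact hmem

end NotWH

open NotWH in
/-- There exists an ultrafilter on `ℕ` that is not weakly Hausdorff (hence not
Hausdorff). -/
theorem exists_not_weaklyHausdorff_ultrafilter :
    ∃ U : Ultrafilter ℕ, ¬ IsWeaklyHausdorffUltra U ∧ ¬ IsHausdorffUltra U := by
  obtain ⟨U, hU⟩ :=
    Ultrafilter.exists_ultrafilter_of_finite_inter_nonempty (Set.range E) fip
  have hEU : ∀ A : Set ℕ, E A ∈ U := fun A => hU ⟨A, rfl⟩
  have hmap : Ultrafilter.map fF U = Ultrafilter.map gG U := by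
    refine Ultrafilter.coe_inj.mp (Filter.ext fun A => ?_)
    simp only [Ultrafilter.coe_map, Filter.mem_map]
    constructor
    · intro h
      refine Filter.mem_of_superset (Filter.inter_mem h (hEU A)) ?_
      intro n hn
      exact hn.2.mp hn.1
    · intro h
      refine Filter.mem_of_superset (Filter.inter_mem h (hEU A)) ?_
      intro n hn
      exact hn.2.mpr hn.1
  have hnotWH : ¬ IsWeaklyHausdorffUltra U := by
    intro hWH
    obtain ⟨X, hXU, hX⟩ := hWH fF gG finToOne_fF finToOne_gG hmap
    obtain ⟨x, hx⟩ := U.nonempty_of_mem hXU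
    exact fF_ne_gG x (hX x hx)
  exact ⟨U, hnotWH, fun hH => hnotWH fun f g _ _ h => hH f g h⟩
end

section
/- Assume the continuum hypothesis. Then there exists a p-point ultrafilter on ℕ that is not weakly Hausdorff. -/
namespace Finset

variable {α κ : Type*} [LinearOrder α] [Fintype κ] [Nonempty κ]

theorem exists_minHomogeneous_subset (c : α → α → κ) (n : ℕ) (F : Finset α)
    (hF : (Fintype.card κ + 1) ^ n ≤ F.card) :
    ∃ G ⊆ F, G.card = n ∧ ∃ col : α → κ, ∀ a ∈ G, ∀ b ∈ G, a < b → c a b = col a := by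
  classical
  induction n generalizing F with
  | zero => exact ⟨∅, empty_subset F, rfl, fun _ => Classical.arbitrary κ, by simp⟩
  | succ n ih =>
    have hFne : F.Nonempty := card_pos.1 (lt_of_lt_of_le (by positivity) hF)
    set a := F.min' hFne
    have hpow : (Fintype.card κ + 1) ^ (n + 1)
        = Fintype.card κ * (Fintype.card κ + 1) ^ n + (Fintype.card κ + 1) ^ n := by ring
    have hrest : (univ : Finset κ).card * (Fintype.card κ + 1) ^ n ≤ (F.erase a).card := by
      rw [card_univ, card_erase_of_mem (F.min'_mem hFne)]
      have : 0 < (Fintype.card κ + 1) ^ n := by positivity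
      omega
    obtain ⟨j, -, hj⟩ := exists_le_card_fiber_of_mul_le_card_of_maps_to
      (fun b _ => mem_univ (c a b)) univ_nonempty hrest
    obtain ⟨G, hGF, hGcard, col, hcol⟩ := ih _ hj
    have haG : a ∉ G := fun ha => by simpa using (mem_filter.1 (hGF ha)).1
    have ha_lt : ∀ b ∈ G, a < b := fun b hb =>
      lt_of_le_of_ne (F.min'_le b (mem_of_mem_erase (mem_filter.1 (hGF hb)).1))
        (ne_of_mem_of_not_mem hb haG).symm
    refine ⟨insert a G, insert_subset (F.min'_mem hFne)
      (hGF.trans ((filter_subset _ _).trans (erase_subset a F))),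
      by rw [card_insert_of_notMem haG, hGcard], Function.update col a j, ?_⟩
    simp only [mem_insert]
    rintro x (rfl | hx) y (rfl | hy) hxy
    · exact absurd hxy (lt_irrefl _)
    · rw [Function.update_self]; exact (mem_filter.1 (hGF hy)).2
    · exact absurd hxy (ha_lt x hx).not_gt
    · rw [Function.update_of_ne (ha_lt x hx).ne']; exact hcol x hx y hy hxy

theorem exists_homogeneous_subset (c : α → α → κ) (m : ℕ) (F : Finset α)
    (hF : (Fintype.card κ + 1) ^ (Fintype.card κ * m) ≤ F.card) :
    ∃ G ⊆ F, m ≤ G.card ∧ ∃ k, ∀ a ∈ G, ∀ b ∈ G, a < b → c a b = k := by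
  classical
  obtain ⟨G, hGF, hGcard, col, hcol⟩ := exists_minHomogeneous_subset c _ F hF
  obtain ⟨k, -, hk⟩ := exists_le_card_fiber_of_mul_le_card_of_maps_to
    (fun a _ => mem_univ (col a)) univ_nonempty (by rw [card_univ, hGcard] : _ ≤ G.card)
  refine ⟨G.filter (col · = k), (filter_subset _ _).trans hGF, hk, k, ?_⟩
  intro a ha b hb hab
  rw [hcol a (mem_filter.1 ha).1 b (mem_filter.1 hb).1 hab, (mem_filter.1 ha).2]

end Finset

theorem Set.Infinite.exists_subset_finite_fibers {α β : Type*} {I : Set α} (hI : I.Infinite)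
    (p : α → β) :
    ∃ J ⊆ I, J.Infinite ∧ ∃ V : Set β, V.Finite ∧ ∀ u ∉ V, (J ∩ p ⁻¹' {u}).Finite := by
  by_cases hfib : ∃ v, (I ∩ p ⁻¹' {v}).Infinite
  · obtain ⟨v, hv⟩ := hfib
    refine ⟨I ∩ p ⁻¹' {v}, Set.inter_subset_left, hv, {v}, Set.finite_singleton v, fun u hu => ?_⟩
    refine Set.finite_empty.subset ?_
    rintro x ⟨⟨-, hxv⟩, hxu⟩
    exact hu ((show p x = u from hxu) ▸ hxv)
  · simp only [not_exists, Set.not_infinite] at hfib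
    exact ⟨I, subset_rfl, hI, ∅, Set.finite_empty, fun u _ => hfib u⟩

theorem exists_transfinite_chain {ι α : Type*} [LinearOrder ι] [WellFoundedLT ι] [Nonempty α]
    (Q : ι → α → Prop) (r : α → α → Prop)
    (extend : ∀ i (A : ∀ j, j < i → α), (∀ j hj, Q j (A j hj)) →
      (∀ j k hj hk, j < k → r (A k hk) (A j hj)) → ∃ a, Q i a ∧ ∀ j hj, r a (A j hj)) :
    ∃ A : ι → α, ∀ i, Q i (A i) ∧ ∀ j < i, r (A i) (A j) := by
  let A : ι → α := wellFounded_lt.fix fun i prev => Classical.epsilon fun a =>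
    ((∀ j hj, Q j (prev j hj)) ∧ ∀ j k hj hk, j < k → r (prev k hk) (prev j hj)) →
      Q i a ∧ ∀ j hj, r a (prev j hj)
  refine ⟨A, fun i => ?_⟩
  induction i using WellFoundedLT.induction with | _ i ih
  have hprev : (∀ j (_ : j < i), Q j (A j)) ∧
      ∀ j k (_ : j < i) (_ : k < i), j < k → r (A k) (A j) :=
    ⟨fun j hj => (ih j hj).1, fun j k _ hk hjk => (ih k hk).2 j hjk⟩
  obtain ⟨a, ha⟩ := extend i (fun j _ => A j) hprev.1 hprev.2
  rw [show A i = _ from wellFounded_lt.fix_eq _ i]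
  exact Classical.epsilon_spec (p := fun a => _ → Q i a ∧ ∀ j (_ : j < i), r a (A j))
    ⟨a, fun _ => ha⟩ hprev

theorem exists_ultrafilter_of_almost_antitone {ι α : Type*} [LinearOrder ι] [Nonempty ι]
    (A : ι → Set α) (hA : ∀ i, (A i).Infinite) (hanti : ∀ i j, i < j → (A j \ A i).Finite) :
    ∃ U : Ultrafilter α, (∀ i, A i ∈ U) ∧ (U : Filter α) ≤ Filter.cofinite := by
  let G : ι → Filter α := fun i => Filter.cofinite ⊓ Filter.principal (A i)
  have hG : Antitone G := fun i j hij => by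
    rcases hij.eq_or_lt with rfl | hij
    · exact le_rfl
    refine le_inf inf_le_left (Filter.le_principal_iff.2 (Filter.mem_inf_principal.2 ?_))
    filter_upwards [(hanti i j hij).compl_mem_cofinite] with x hx hxj
    by_contra hxi
    exact hx ⟨hxj, hxi⟩
  have : (⨅ i, G i).NeBot :=
    Filter.iInf_neBot_of_directed' hG.directed_ge fun i => (hA i).cofinite_inf_principal_neBot
  refine ⟨Ultrafilter.of (⨅ i, G i), fun i => ?_, ?_⟩
  · exact (Ultrafilter.of_le _).trans (iInf_le G i)
      (Filter.mem_inf_of_right (Filter.mem_principal_self _))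
  · exact (Ultrafilter.of_le _).trans ((iInf_le G (Classical.arbitrary ι)).trans inf_le_left)

namespace Ultrafilter

variable {α β : Type*}

theorem map_eq_map_of_eventually_mem_iff {U : Ultrafilter α} {f g : α → β}
    (h : ∀ s : Set β, ∀ᶠ x in (U : Filter α), f x ∈ s ↔ g x ∈ s) : U.map f = U.map g :=
  Ultrafilter.ext fun s => Filter.eventually_congr (h s)

theorem exists_mem_finite_fibers {U : Ultrafilter α} {h : α → β} {X : Set α} (hX : X ∈ U)
    {V : Set β} (hV : V.Finite) (hXV : ∀ u ∉ V, (X ∩ h ⁻¹' {u}).Finite)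
    (hfib : ∀ v, h ⁻¹' {v} ∉ U) : ∃ Y ∈ U, ∀ u, (Y ∩ h ⁻¹' {u}).Finite := by
  have hVU : h ⁻¹' V ∉ U := by
    rw [← Set.biUnion_preimage_singleton, Ultrafilter.finite_biUnion_mem_iff hV]
    exact fun ⟨v, _, hv⟩ => hfib v hv
  refine ⟨X \ h ⁻¹' V, Filter.sdiff_mem hX (Ultrafilter.compl_mem_iff_notMem.2 hVU), fun u => ?_⟩
  by_cases hu : u ∈ V
  · refine Set.finite_empty.subset ?_
    rintro x ⟨⟨-, hxV⟩, hxu⟩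
    exact hxV (by rwa [Set.mem_preimage, show h x = u from hxu])
  · exact (hXV u hu).subset (Set.inter_subset_inter_left _ Set.sdiff_subset)

end Ultrafilter

theorem isPPoint_of_exists_finite_fibers {U : Ultrafilter ℕ} (hU : (U : Filter ℕ) ≤ Filter.cofinite)
    (hfib : ∀ h : ℕ → ℕ, ∃ X ∈ U, ∃ V : Set ℕ, V.Finite ∧ ∀ u ∉ V, (X ∩ h ⁻¹' {u}).Finite) :
    IsPPoint U := by
  classical
  refine ⟨fun n hn => ?_, fun Xs hXs => ?_⟩
  · have := Filter.le_cofinite_iff_compl_singleton_mem.1 hU n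
    simp [hn] at this
  let Z : ℕ → Set ℕ := fun n => ⋂ k ∈ Set.Iic n, Xs k
  have hZU : ∀ n, Z n ∈ U := fun n => (Filter.biInter_mem (Set.finite_Iic n)).2 fun k _ => hXs k
  -- `h` is unbounded on every member of `U`, yet `h ≤ n` off `Z n`.
  let h : ℕ → ℕ := fun x => Nat.findGreatest (x ∈ Z ·) x
  have h_le : ∀ n x, x ∉ Z n → h x ≤ n := fun n x hx => by
    by_contra! hlt
    have hZ := Nat.findGreatest_of_ne_zero (rfl : h x = _) (by omega)
    exact hx (Set.biInter_subset_biInter_left (Set.Iic_subset_Iic.2 hlt.le) hZ)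
  have hne : ∀ v, h ⁻¹' {v} ∉ U := fun v hv => by
    have hlarge : {x | v + 1 ≤ x} ∈ U := hU ((Set.finite_lt_nat (v + 1)).subset fun x hx => by
      simpa using hx)
    obtain ⟨x, ⟨hxv, hxZ⟩, hx⟩ := Ultrafilter.nonempty_of_mem
      (Filter.inter_mem (Filter.inter_mem hv (hZU (v + 1))) hlarge)
    have : v + 1 ≤ h x := Nat.le_findGreatest hx hxZ
    simp only [Set.mem_preimage, Set.mem_singleton_iff] at hxv
    omega
  obtain ⟨X, hXU, V, hV, hXV⟩ := hfib h
  obtain ⟨Y, hYU, hY⟩ := Ultrafilter.exists_mem_finite_fibers hXU hV hXV hne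
  refine ⟨Y, hYU, fun n => ((Set.finite_Iic n).biUnion fun u _ => hY u).subset ?_⟩
  rintro x ⟨hxY, hxn⟩
  have hxZ : x ∉ Z n := fun hx => hxn (Set.biInter_subset_of_mem (Set.mem_Iic.2 le_rfl) hx)
  exact Set.mem_biUnion (Set.mem_Iic.2 (h_le n x hxZ)) ⟨hxY, rfl⟩

def blockPairs : Set ℕ :=
  {n | n.unpair.1 ≠ n.unpair.2 ∧ Nat.log 2 n.unpair.1 = Nat.log 2 n.unpair.2}

def pairCodes (F : Finset ℕ) : Finset ℕ := F.offDiag.image fun p => Nat.pair p.1 p.2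

theorem mem_pairCodes {F : Finset ℕ} {n : ℕ} :
    n ∈ pairCodes F ↔ ∃ a ∈ F, ∃ b ∈ F, a ≠ b ∧ Nat.pair a b = n := by
  simp [pairCodes, and_assoc]

theorem pairCodes_mono : Monotone pairCodes := fun _ _ h =>
  Finset.image_subset_image (Finset.offDiag_mono h)

theorem pair_mem_blockPairs {a b : ℕ} :
    Nat.pair a b ∈ blockPairs ↔ a ≠ b ∧ Nat.log 2 a = Nat.log 2 b := by
  simp [blockPairs]

open Classical in
noncomputable def pairFst (n : ℕ) : ℕ := if n ∈ blockPairs then n.unpair.1 else n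

open Classical in
noncomputable def pairSnd (n : ℕ) : ℕ := if n ∈ blockPairs then n.unpair.2 else n

theorem pairFst_of_mem {n : ℕ} (hn : n ∈ blockPairs) : pairFst n = n.unpair.1 := if_pos hn

theorem pairSnd_of_mem {n : ℕ} (hn : n ∈ blockPairs) : pairSnd n = n.unpair.2 := if_pos hn

theorem pairFst_ne_pairSnd {n : ℕ} (hn : n ∈ blockPairs) : pairFst n ≠ pairSnd n := by
  rw [pairFst_of_mem hn, pairSnd_of_mem hn]
  exact hn.1

theorem finite_blockPairs_log_fst (k : ℕ) :
    {n ∈ blockPairs | Nat.log 2 n.unpair.1 = k}.Finite := by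
  refine (Set.finite_lt_nat ((2 ^ (k + 1)) ^ 2)).subset fun n ⟨hn, hk⟩ => ?_
  have hlt : ∀ x, Nat.log 2 x = k → x + 1 ≤ 2 ^ (k + 1) := fun x hx =>
    hx ▸ Nat.lt_pow_succ_log_self one_lt_two x
  calc n = Nat.pair n.unpair.1 n.unpair.2 := (Nat.pair_unpair n).symm
    _ < (max n.unpair.1 n.unpair.2 + 1) ^ 2 := Nat.pair_lt_max_add_one_sq _ _
    _ ≤ (2 ^ (k + 1)) ^ 2 := Nat.pow_le_pow_left (by
        have := hlt _ hk; have := hlt _ (hn.2 ▸ hk); omega) 2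

theorem finToOne_pairFst : FinToOne pairFst := fun v =>
  ((finite_blockPairs_log_fst (Nat.log 2 v)).insert v).subset fun n hn => by
    by_cases hD : n ∈ blockPairs
    · exact Or.inr ⟨hD, by rw [← pairFst_of_mem hD, show pairFst n = v from hn]⟩
    · exact Or.inl (by simpa [pairFst, hD] using hn)

theorem finToOne_pairSnd : FinToOne pairSnd := fun v =>
  ((finite_blockPairs_log_fst (Nat.log 2 v)).insert v).subset fun n hn => by
    by_cases hD : n ∈ blockPairs
    · exact Or.inr ⟨hD, by rw [hD.2, ← pairSnd_of_mem hD, show pairSnd n = v from hn]⟩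
    · exact Or.inl (by simpa [pairSnd, hD] using hn)

/-- Reading the codes in `S` as directed edges on `ℕ`: the edges of `S` inside the dyadic blocks
contain complete graphs of every finite size. -/
def HasLargeCliques (S : Set ℕ) : Prop :=
  ∀ m, ∃ F : Finset ℕ, m ≤ F.card ∧ ↑(pairCodes F) ⊆ S ∩ blockPairs

theorem hasLargeCliques_blockPairs : HasLargeCliques blockPairs := by
  refine fun m => ⟨Finset.Ico (2 ^ m) (2 ^ (m + 1)), ?_, fun n hn => ?_⟩
  · rw [Nat.card_Ico, pow_succ]
    have := Nat.lt_two_pow_self (n := m)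
    omega
  · obtain ⟨a, ha, b, hb, hab, rfl⟩ := mem_pairCodes.1 hn
    have hlog : ∀ x ∈ Finset.Ico (2 ^ m) (2 ^ (m + 1)), Nat.log 2 x = m := fun x hx =>
      Nat.log_eq_of_pow_le_of_lt_pow (Finset.mem_Ico.1 hx).1 (Finset.mem_Ico.1 hx).2
    have hmem := pair_mem_blockPairs.2 ⟨hab, (hlog a ha).trans (hlog b hb).symm⟩
    exact ⟨hmem, hmem⟩

namespace HasLargeCliques

variable {S T : Set ℕ}

theorem infinite (hS : HasLargeCliques S) : S.Infinite := by
  refine Set.infinite_of_not_bddAbove fun ⟨N, hN⟩ => ?_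
  obtain ⟨F, hF, hFS⟩ := hS (N + 2)
  obtain ⟨b, hbF, hbN⟩ : ∃ b ∈ F, N < b := by
    by_contra! h
    have := Finset.card_le_card (s := F) (t := Finset.range (N + 1))
      fun x hx => Finset.mem_range.2 (Nat.lt_succ_of_le (h x hx))
    rw [Finset.card_range] at this
    omega
  obtain ⟨a, haF, hab⟩ := Finset.exists_mem_ne (by omega : 1 < F.card) b
  have hpair := hN (hFS (mem_pairCodes.2 ⟨a, haF, b, hbF, hab, rfl⟩)).1
  have := Nat.right_le_pair a b
  omega

theorem of_diff_finite (hS : HasLargeCliques S) (hST : (S \ T).Finite) :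
    HasLargeCliques T := by
  intro m
  let K := hST.toFinset.biUnion fun n => {n.unpair.1, n.unpair.2}
  obtain ⟨F, hF, hFS⟩ := hS (m + K.card)
  refine ⟨F \ K, by have := Finset.le_card_sdiff K F; omega, fun n hn => ?_⟩
  obtain ⟨a, ha, b, hb, hab, rfl⟩ := mem_pairCodes.1 hn
  obtain ⟨hS', hD⟩ := hFS (mem_pairCodes.2
    ⟨a, Finset.sdiff_subset ha, b, Finset.sdiff_subset hb, hab, rfl⟩)
  refine ⟨by_contra fun hT => (Finset.mem_sdiff.1 ha).2 ?_, hD⟩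
  exact Finset.mem_biUnion.2 ⟨_, hST.mem_toFinset.2 ⟨hS', hT⟩, by simp⟩

theorem inter_agree (hS : HasLargeCliques S) (X : Set ℕ) :
    HasLargeCliques (S ∩ {n | pairFst n ∈ X ↔ pairSnd n ∈ X}) := by
  classical
  intro m
  obtain ⟨F, hF, hFS⟩ := hS (2 * m)
  have hsub : ∀ G ⊆ F, (∀ a ∈ G, ∀ b ∈ G, (a ∈ X ↔ b ∈ X)) →
      ↑(pairCodes G) ⊆ (S ∩ {n | pairFst n ∈ X ↔ pairSnd n ∈ X}) ∩ blockPairs := by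
    intro G hGF hG n hn
    obtain ⟨hnS, hnD⟩ := hFS (pairCodes_mono hGF hn)
    obtain ⟨a, ha, b, hb, -, rfl⟩ := mem_pairCodes.1 hn
    refine ⟨⟨hnS, ?_⟩, hnD⟩
    simpa [pairFst_of_mem hnD, pairSnd_of_mem hnD] using hG a ha b hb
  have hsplit := Finset.card_filter_add_card_filter_not (s := F) (· ∈ X)
  rcases le_or_gt m (F.filter (· ∈ X)).card with h | h
  · refine ⟨_, h, hsub _ (Finset.filter_subset _ _) fun a ha b hb => ?_⟩
    simp only [Finset.mem_filter] at ha hb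
    exact iff_of_true ha.2 hb.2
  · refine ⟨_, (by omega : m ≤ (F.filter (· ∉ X)).card),
      hsub _ (Finset.filter_subset _ _) fun a ha b hb => ?_⟩
    simp only [Finset.mem_filter] at ha hb
    exact iff_of_false ha.2 hb.2

theorem exists_pseudoIntersection {T : ℕ → Set ℕ} (hT : ∀ n, HasLargeCliques (T n))
    (hanti : Antitone T) :
    ∃ B, HasLargeCliques B ∧ B ⊆ blockPairs ∧ ∀ n, (B \ T n).Finite := by
  choose F hF hFT using fun n => hT n n
  refine ⟨⋃ n, ↑(pairCodes (F n)), fun m => ⟨F m, hF m, fun x hx => ?_⟩,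
    Set.iUnion_subset fun n => (hFT n).trans Set.inter_subset_right, fun n => ?_⟩
  · exact ⟨Set.mem_iUnion_of_mem m hx, (hFT m hx).2⟩
  · refine ((Set.finite_Iio n).biUnion fun k _ => (pairCodes (F k)).finite_toSet).subset ?_
    rintro x ⟨hx, hxT⟩
    obtain ⟨k, hk⟩ := Set.mem_iUnion.1 hx
    refine Set.mem_biUnion (Set.mem_Iio.2 (not_le.1 fun hnk => hxT ?_)) hk
    exact hanti hnk (hFT k hk).1

theorem exists_subset_finite_fibers (hS : HasLargeCliques S) (h : ℕ → ℕ) :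
    ∃ C ⊆ S, HasLargeCliques C ∧ ∃ V : Set ℕ, V.Finite ∧ ∀ u ∉ V, (C ∩ h ⁻¹' {u}).Finite := by
  have hcapped : ∀ n, ∃ G : Finset ℕ, n ≤ G.card ∧ ↑(pairCodes G) ⊆ S ∩ blockPairs ∧
      ∃ p q : ℕ, ∀ x ∈ pairCodes G, min (h x) n = p ∨ min (h x) n = q := by
    intro n
    let c : ℕ → ℕ → Fin (n + 1) × Fin (n + 1) := fun a b =>
      (⟨min (h (Nat.pair a b)) n, by omega⟩, ⟨min (h (Nat.pair b a)) n, by omega⟩)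
    obtain ⟨F, hF, hFS⟩ := hS _
    obtain ⟨G, hGF, hG, k, hk⟩ := Finset.exists_homogeneous_subset c n F hF
    refine ⟨G, hG, fun x hx => hFS (pairCodes_mono hGF hx), k.1, k.2, fun x hx => ?_⟩
    obtain ⟨a, ha, b, hb, hab, rfl⟩ := mem_pairCodes.1 hx
    rcases hab.lt_or_gt with hab | hab
    · exact Or.inl (congrArg (fun k => (k.1 : ℕ)) (hk a ha b hb hab))
    · exact Or.inr (congrArg (fun k => (k.2 : ℕ)) (hk b hb a ha hab))
  choose G hG hGS p q hpq using hcapped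
  obtain ⟨J₁, -, hJ₁, V₁, hV₁, hpV⟩ := Set.infinite_univ.exists_subset_finite_fibers p
  obtain ⟨J, hJJ₁, hJ, V₂, hV₂, hqV⟩ := hJ₁.exists_subset_finite_fibers q
  refine ⟨⋃ n ∈ J, ↑(pairCodes (G n)),
    Set.iUnion₂_subset fun n _ => (hGS n).trans Set.inter_subset_left, fun m => ?_,
    V₁ ∪ V₂, hV₁.union hV₂, fun u hu => ?_⟩
  · obtain ⟨n, hnJ, hmn⟩ := hJ.exists_gt m
    exact ⟨G n, hmn.le.trans (hG n), fun x hx => ⟨Set.mem_biUnion hnJ hx, (hGS n hx).2⟩⟩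
  rw [Set.mem_union, not_or] at hu
  -- only the cliques with `n ≤ u`, `p n = u` or `q n = u` meet the fibre over `u`
  have hJu : (J ∩ (Set.Iic u ∪ p ⁻¹' {u} ∪ q ⁻¹' {u})).Finite := by
    refine ((Set.finite_Iic u).union ((hpV u hu.1).union (hqV u hu.2))).subset ?_
    rintro n ⟨hnJ, (hn | hn) | hn⟩
    exacts [Or.inl hn, Or.inr (Or.inl ⟨hJJ₁ hnJ, hn⟩), Or.inr (Or.inr ⟨hnJ, hn⟩)]
  refine (hJu.biUnion fun n _ => (pairCodes (G n)).finite_toSet).subset ?_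
  rintro x ⟨hx, hxu⟩
  obtain ⟨n, hnJ, hxn⟩ := Set.mem_iUnion₂.1 hx
  refine Set.mem_biUnion ⟨hnJ, ?_⟩ hxn
  rcases le_or_gt n u with hnu | hun
  · exact Or.inl (Or.inl hnu)
  · have hcap := hpq n x hxn
    rw [show h x = u from hxu, min_eq_left hun.le] at hcap
    exact hcap.elim (fun hp => Or.inl (Or.inr hp.symm)) fun hq => Or.inr hq.symm

end HasLargeCliques

theorem exists_hasLargeCliques_almost_subset {κ : Type*} [LinearOrder κ] [Countable κ]
    {S : κ → Set ℕ} (hS : ∀ a, HasLargeCliques (S a)) (hanti : ∀ a b, a < b → (S b \ S a).Finite) :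
    ∃ B, HasLargeCliques B ∧ B ⊆ blockPairs ∧ ∀ a, (B \ S a).Finite := by
  rcases isEmpty_or_nonempty κ with hκ | hκ
  · exact ⟨blockPairs, hasLargeCliques_blockPairs, subset_rfl, hκ.elim⟩
  obtain ⟨σ, hσ⟩ := exists_surjective_nat κ
  let T : ℕ → Set ℕ := fun n => ⋂ k ∈ Finset.range (n + 1), S (σ k)
  have hT : ∀ n, HasLargeCliques (T n) := fun n => by
    -- the latest of `σ 0, …, σ n` is almost contained in all of them
    obtain ⟨k, hk, hmax⟩ := Finset.exists_max_image (Finset.range (n + 1)) σ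
      Finset.nonempty_range_add_one
    have hfin : ∀ j ∈ Finset.range (n + 1), (S (σ k) \ S (σ j)).Finite := fun j hj =>
      (hmax j hj).lt_or_eq.elim (hanti _ _) fun h => by simp [h]
    refine (hS (σ k)).of_diff_finite
      (((Finset.range (n + 1)).finite_toSet.biUnion hfin).subset ?_)
    rintro x ⟨hxk, hxT⟩
    simp only [T, Set.mem_iInter, not_forall] at hxT
    obtain ⟨j, hj, hxj⟩ := hxT
    exact Set.mem_biUnion hj ⟨hxk, hxj⟩
  have hTanti : Antitone T := fun n m hnm =>
    Set.biInter_subset_biInter_left (by simpa using Finset.range_subset_range.2 (by omega))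
  obtain ⟨B, hB, hBD, hBT⟩ := HasLargeCliques.exists_pseudoIntersection hT hTanti
  refine ⟨B, hB, hBD, fun a => ?_⟩
  obtain ⟨n, rfl⟩ := hσ a
  exact (hBT n).subset (Set.sdiff_subset_sdiff_right (Set.biInter_subset_of_mem (by simp)))

structure Settles (X : Set ℕ) (h : ℕ → ℕ) (S : Set ℕ) : Prop where
  hasLargeCliques : HasLargeCliques S
  subset_blockPairs : S ⊆ blockPairs
  subset_agree : S ⊆ {n | pairFst n ∈ X ↔ pairSnd n ∈ X}
  finite_fibers : ∃ V : Set ℕ, V.Finite ∧ ∀ u ∉ V, (S ∩ h ⁻¹' {u}).Finite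

theorem exists_settles_almost_subset {κ : Type*} [LinearOrder κ] [Countable κ]
    {S : κ → Set ℕ} (hS : ∀ a, HasLargeCliques (S a)) (hanti : ∀ a b, a < b → (S b \ S a).Finite)
    (X : Set ℕ) (h : ℕ → ℕ) : ∃ C, Settles X h C ∧ ∀ a, (C \ S a).Finite := by
  obtain ⟨B, hB, hBD, hBS⟩ := exists_hasLargeCliques_almost_subset hS hanti
  obtain ⟨C, hCB, hC, hCh⟩ := (hB.inter_agree X).exists_subset_finite_fibers h
  exact ⟨C, ⟨hC, fun x hx => hBD (hCB hx).1, fun x hx => (hCB hx).2, hCh⟩,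
    fun a => (hBS a).subset (Set.sdiff_subset_sdiff_left fun x hx => (hCB hx).1)⟩

theorem exists_tower {ι : Type*} [LinearOrder ι] [WellFoundedLT ι]
    (hι : ∀ i : ι, (Set.Iio i).Countable) (X : ι → Set ℕ) (h : ι → ℕ → ℕ) :
    ∃ A : ι → Set ℕ, (∀ i, Settles (X i) (h i) (A i)) ∧ ∀ i j, i < j → (A j \ A i).Finite := by
  obtain ⟨A, hA⟩ := exists_transfinite_chain (fun i => Settles (X i) (h i))
    (fun S S' => (S \ S').Finite) fun i prev hprev hchain => by
      have := (hι i).to_subtype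
      obtain ⟨C, hC, hCprev⟩ := exists_settles_almost_subset
        (S := fun j : Set.Iio i => prev j j.2) (fun j => (hprev j j.2).hasLargeCliques)
        (fun j k hjk => hchain j k j.2 k.2 hjk) (X i) (h i)
      exact ⟨C, hC, fun j hj => hCprev ⟨j, hj⟩⟩
  exact ⟨A, fun i => (hA i).1, fun i j hij => (hA j).2 i hij⟩

universe u v

open Cardinal Ordinal

theorem countable_Iio_omega_one (i : (ω₁ : Ordinal.{u}).ToType) : (Set.Iio i).Countable :=
  Cardinal.le_aleph0_iff_set_countable.1 (lt_aleph_one_iff.1 (by simpa using mk_Iio_lt i (by simp)))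

theorem exists_surjective_omega_one_of_CH {β : Type v} (ch : (2 : Cardinal.{u}) ^ ℵ₀ = ℵ₁)
    (hβ : #β = 2 ^ ℵ₀) : ∃ f : (ω₁ : Ordinal.{v}).ToType → β, Function.Surjective f := by
  have ch' : (2 : Cardinal.{v}) ^ ℵ₀ = ℵ₁ := by
    apply lift_injective.{u}
    simpa using congrArg Cardinal.lift.{v} ch
  obtain ⟨e⟩ := Cardinal.eq.1 (show #(ω₁ : Ordinal.{v}).ToType = #β by simp [hβ, ch'])
  exact ⟨e, e.surjective⟩

/-- Under CH there is a p-point that is not weakly Hausdorff. -/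
theorem exists_pPoint_not_weaklyHausdorff_of_CH
    (ch : (2 : Cardinal) ^ Cardinal.aleph0 = Cardinal.aleph 1) :
    ∃ U : Ultrafilter ℕ, IsPPoint U ∧ ¬ IsWeaklyHausdorffUltra U := by
  obtain ⟨X, hX⟩ := exists_surjective_omega_one_of_CH (β := Set ℕ) ch (by simp)
  obtain ⟨h, hh⟩ := exists_surjective_omega_one_of_CH (β := ℕ → ℕ) ch (by simp)
  have : Nonempty (ω₁ : Ordinal.{0}).ToType := nonempty_toType_iff.2 (omega_pos 1).ne'
  obtain ⟨A, hA, hanti⟩ := exists_tower countable_Iio_omega_one X h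
  obtain ⟨U, hAU, hU⟩ :=
    exists_ultrafilter_of_almost_antitone A (fun i => (hA i).hasLargeCliques.infinite) hanti
  refine ⟨U, isPPoint_of_exists_finite_fibers hU fun f => ?_, fun hWH => ?_⟩
  · obtain ⟨i, rfl⟩ := hh f
    exact ⟨A i, hAU i, (hA i).finite_fibers⟩
  have hmap : U.map pairFst = U.map pairSnd :=
    Ultrafilter.map_eq_map_of_eventually_mem_iff fun s => by
      obtain ⟨i, rfl⟩ := hX s
      exact Filter.mem_of_superset (hAU i) (hA i).subset_agree
  obtain ⟨Y, hYU, hY⟩ := hWH _ _ finToOne_pairFst finToOne_pairSnd hmap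
  obtain ⟨x, hxY, hxA⟩ :=
    Ultrafilter.nonempty_of_mem (Filter.inter_mem hYU (hAU (Classical.arbitrary _)))
  exact pairFst_ne_pairSnd ((hA _).subset_blockPairs hxA) (hY x hxY)
end

section
/- Assume NCF holds and there exists a strongly non-Hausdorff ultrafilter on ℕ. Then no ultrafilter on ℕ is weakly Hausdorff; in particular, no ultrafilter on ℕ is Hausdorff. -/
def StronglyNonHausdorff (U : Ultrafilter ℕ) : Prop :=
  ∀ f : ℕ → ℕ, FinToOne f → ¬ IsWeaklyHausdorffUltra (Ultrafilter.map f U)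

lemma finToOne_comp {f g : ℕ → ℕ} (hf : FinToOne f) (hg : FinToOne g) :
    FinToOne (g ∘ f) := by
  intro n
  have : (g ∘ f) ⁻¹' {n} = ⋃ s ∈ g ⁻¹' {n}, f ⁻¹' {s} := by
    ext x; simp [Set.mem_preimage]
  rw [this]
  exact (hg n).biUnion (fun s _ => hf s)

lemma wh_map {U : Ultrafilter ℕ} (hU : IsWeaklyHausdorffUltra U) {h : ℕ → ℕ}
    (hh : FinToOne h) : IsWeaklyHausdorffUltra (Ultrafilter.map h U) := by
  intro f g hf hg heq
  rw [Ultrafilter.map_map, Ultrafilter.map_map] at heq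
  obtain ⟨X, hX, hfg⟩ := hU (f ∘ h) (g ∘ h) (finToOne_comp hh hf) (finToOne_comp hh hg) heq
  refine ⟨h '' X, ?_, ?_⟩
  · exact Ultrafilter.mem_map.2 (U.mem_of_superset hX (Set.subset_preimage_image h X))
  · rintro y ⟨x, hx, rfl⟩; exact hfg x hx

/-- If NCF holds and there is a strongly non-Hausdorff ultrafilter, then no
ultrafilter on `ℕ` is weakly Hausdorff, and in particular none is Hausdorff. -/
theorem no_weaklyHausdorff_of_NCF_and_stronglyNonHausdorff
    (ncf : ∀ U V : Ultrafilter ℕ, ∃ h : ℕ → ℕ, FinToOne h ∧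
      Ultrafilter.map h U = Ultrafilter.map h V)
    (hsnh : ∃ U : Ultrafilter ℕ, StronglyNonHausdorff U) :
    (∀ U : Ultrafilter ℕ, ¬ IsWeaklyHausdorffUltra U) ∧
    (∀ U : Ultrafilter ℕ, ¬ IsHausdorffUltra U) := by
  obtain ⟨W, hW⟩ := hsnh
  have main : ∀ U : Ultrafilter ℕ, ¬ IsWeaklyHausdorffUltra U := by
    intro U hU
    obtain ⟨h, hh, heq⟩ := ncf U W
    exact hW h hh (heq ▸ wh_map hU hh)
  exact ⟨main, fun U hU => main U (fun f g _ _ hfg => hU f g hfg)⟩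
end
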